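/- arXiv:1407.5144 — 10 statements merged into one kernel-verified Lean document; each statement's English description precedes it below -/
import Mathlib

section
/- For every dimension n ≥ 1, constants L, R > 0, and accuracy 0 < ε ≤ LR/8, setting M := ⌊(1/3)·log₂(LR/ε)⌋, there exists a family of 2^{nM} convex functions from the cube [−R,R]^n to ℝ, each Lipschitz with constant L with respect to the supremum norm ‖·‖_∞ on ℝ^n, such that the sets of ε-minima of any two distinct members of the family are disjoint. -/
/-- The set of ε-minima of `f` on `X`: points `x ∈ X` with `f x < f* + ε`,
where `f* = inf_{x ∈ X} f x`. -/
def epsMinima {E : Type*} (X : Set E) (f : E → ℝ) (ε : ℝ) : Set E :=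
  {x ∈ X | f x < sInf (f '' X) + ε}

/-- for every `n ≥ 1`, `L, R > 0` and `0 < ε ≤ LR/8`, with
`M := ⌊(1/3)·log₂(LR/ε)⌋`, there is a family of `2^{nM}` convex functions on
the cube `[-R,R]^n`, each `L`-Lipschitz for the sup-norm, whose sets of
ε-minima are pairwise disjoint. -/
theorem box_packing_family (n : ℕ) (hn : 1 ≤ n) (L R ε : ℝ)
    (hL : 0 < L) (hR : 0 < R) (hε : 0 < ε) (hεLR : ε ≤ L * R / 8) :
    ∃ fam : (Fin n → Fin (⌊(1/3 : ℝ) * Real.logb 2 (L * R / ε)⌋₊) → Bool) →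
        (Fin n → ℝ) → ℝ,
      Function.Injective fam ∧
      (∀ σ, ConvexOn ℝ (Set.Icc (fun _ : Fin n => -R) (fun _ : Fin n => R)) (fam σ)) ∧
      (∀ σ, ∀ x ∈ Set.Icc (fun _ : Fin n => -R) (fun _ : Fin n => R),
        ∀ y ∈ Set.Icc (fun _ : Fin n => -R) (fun _ : Fin n => R),
          |fam σ x - fam σ y| ≤ L * ‖x - y‖) ∧
      (∀ σ τ, σ ≠ τ →
        epsMinima (Set.Icc (fun _ : Fin n => -R) (fun _ : Fin n => R)) (fam σ) ε ∩
          epsMinima (Set.Icc (fun _ : Fin n => -R) (fun _ : Fin n => R)) (fam τ) ε = ∅) := by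
  set t : ℝ := L * R / ε with ht
  have ht8 : (8:ℝ) ≤ t := (le_div_iff₀ hε).2 (by linarith)
  set M : ℕ := ⌊(1/3 : ℝ) * Real.logb 2 t⌋₊ with hM
  have h2M : (0:ℝ) < 2 ^ M := by positivity
  have hMle : ((2:ℝ))^M ≤ t := by
    have h0 : (0:ℝ) ≤ (1/3 : ℝ) * Real.logb 2 t := by
      have := Real.logb_nonneg (by norm_num : (1:ℝ) < 2) (by linarith : (1:ℝ) ≤ t)
      linarith
    have h1 : (M:ℝ) ≤ (1/3) * Real.logb 2 t := Nat.floor_le h0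
    have h2 : ((2:ℝ))^M = (2:ℝ) ^ (M:ℝ) := (Real.rpow_natCast 2 M).symm
    have h3 : (2:ℝ) ^ (M:ℝ) ≤ (2:ℝ) ^ ((1/3 : ℝ) * Real.logb 2 t) :=
      Real.rpow_le_rpow_of_exponent_le (by norm_num) h1
    have h4 : (2:ℝ) ^ ((1/3 : ℝ) * Real.logb 2 t) = t ^ ((1:ℝ)/3) := by
      rw [mul_comm, Real.rpow_mul (by norm_num : (0:ℝ) ≤ 2),
        Real.rpow_logb (by norm_num) (by norm_num) (by linarith : (0:ℝ) < t)]
    have h5 : t ^ ((1:ℝ)/3) ≤ t ^ (1:ℝ) :=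
      Real.rpow_le_rpow_of_exponent_le (by linarith) (by norm_num)
    rw [h2]
    calc (2:ℝ)^(M:ℝ) ≤ t ^ ((1:ℝ)/3) := h4 ▸ h3
      _ ≤ t := by rw [Real.rpow_one] at h5; exact h5
  set d : ℝ := 2 * R / 2 ^ M with hdd
  have hd0 : 0 < d := by positivity
  have hd : 2 * ε / L ≤ d := by
    rw [hdd]
    rw [div_le_div_iff₀ hL h2M]
    have : (2:ℝ)^M * ε ≤ L * R := by
      have := (le_div_iff₀ hε).1 hMle
      linarith
    nlinarith
  -- encoding of bit-vectors as natural numbers < 2^M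
  set val : (Fin M → Bool) → ℕ :=
    fun b => ((finFunctionFinEquiv (fun k => finTwoEquiv.symm (b k)) : Fin (2^M)) : ℕ)
    with hval
  have hvalinj : Function.Injective val := by
    intro a b hab
    have : (fun k => finTwoEquiv.symm (a k)) = (fun k => finTwoEquiv.symm (b k)) :=
      finFunctionFinEquiv.injective (Fin.val_injective hab)
    funext k
    exact finTwoEquiv.symm.injective (congrFun this k)
  have hvallt : ∀ b, (val b : ℝ) < 2 ^ M := by
    intro b
    exact_mod_cast (finFunctionFinEquiv (fun k => finTwoEquiv.symm (b k))).isLt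
  set X : Set (Fin n → ℝ) := Set.Icc (fun _ : Fin n => -R) (fun _ : Fin n => R) with hX
  set p : (Fin n → Fin M → Bool) → (Fin n → ℝ) := fun σ i => -R + (val (σ i)) * d with hp
  have hpX : ∀ σ, p σ ∈ X := by
    intro σ
    constructor <;> intro i <;> simp only [hp]
    · have : (0:ℝ) ≤ (val (σ i)) * d := by positivity
      linarith
    · have h1 : (val (σ i) : ℝ) * d ≤ 2 ^ M * d := by
        have := (hvallt (σ i)).le
        nlinarith
      have h2 : (2:ℝ) ^ M * d = 2 * R := by
        rw [hdd]; field_simp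
      linarith
  set fam : (Fin n → Fin M → Bool) → (Fin n → ℝ) → ℝ :=
    fun σ x => L * ‖x - p σ‖ with hfam
  have hfam0 : ∀ σ, fam σ (p σ) = 0 := by intro σ; simp [hfam]
  have hfamnn : ∀ σ x, 0 ≤ fam σ x := by intro σ x; positivity
  have hsep : ∀ σ τ, σ ≠ τ → d ≤ ‖p σ - p τ‖ := by
    intro σ τ hne
    obtain ⟨i, hi⟩ := Function.ne_iff.1 hne
    have hvi : val (σ i) ≠ val (τ i) := fun h => hi (hvalinj h)
    have h1 : (1:ℝ) ≤ |(val (σ i) : ℝ) - (val (τ i) : ℝ)| := by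
      have : ((val (σ i) : ℤ)) ≠ (val (τ i) : ℤ) := by exact_mod_cast hvi
      have := Int.one_le_abs (sub_ne_zero.2 this)
      exact_mod_cast this
    have h2 : d ≤ |p σ i - p τ i| := by
      have : p σ i - p τ i = ((val (σ i) : ℝ) - (val (τ i) : ℝ)) * d := by
        simp only [hp]; ring
      rw [this, abs_mul, abs_of_pos hd0]
      nlinarith
    calc d ≤ |p σ i - p τ i| := h2
      _ = ‖(p σ - p τ) i‖ := by simp [Real.norm_eq_abs]
      _ ≤ ‖p σ - p τ‖ := norm_le_pi_norm _ i
  have hinf : ∀ σ, sInf (fam σ '' X) ≤ 0 := by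
    intro σ
    apply csInf_le
    · exact ⟨0, fun z hz => by obtain ⟨x, _, rfl⟩ := hz; exact hfamnn σ x⟩
    · exact ⟨p σ, hpX σ, hfam0 σ⟩
  have hmin : ∀ σ x, x ∈ epsMinima X (fam σ) ε → ‖x - p σ‖ < ε / L := by
    intro σ x hx
    have h1 : L * ‖x - p σ‖ < ε := lt_of_lt_of_le hx.2 (by linarith [hinf σ])
    rw [lt_div_iff₀ hL]
    nlinarith
  refine ⟨fam, ?_, ?_, ?_, ?_⟩
  · -- injective
    intro σ τ h
    have h1 : fam τ (p σ) = 0 := by rw [← h]; exact hfam0 σ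
    have h2 : ‖p σ - p τ‖ = 0 := by
      rw [hfam] at h1
      rcases mul_eq_zero.1 h1 with h | h
      · exact absurd h hL.ne'
      · exact h
    have h3 : p σ = p τ := by rwa [norm_eq_zero, sub_eq_zero] at h2
    funext i k
    have h4 : val (σ i) = val (τ i) := by
      have := congrFun h3 i
      simp only [hp] at this
      have : (val (σ i) : ℝ) = val (τ i) := by
        field_simp at this
        exact mul_right_cancel₀ hd0.ne' (by linarith)
      exact_mod_cast this
    exact congrFun (hvalinj h4) k
  · -- convex
    intro σ
    refine ⟨convex_Icc _ _, fun x _ y _ a b ha hb hab => ?_⟩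
    simp only [hfam, smul_eq_mul]
    have key : a • x + b • y - p σ = a • (x - p σ) + b • (y - p σ) := by
      funext i
      simp only [Pi.add_apply, Pi.sub_apply, Pi.smul_apply, smul_eq_mul]
      linear_combination (p σ i) * hab
    rw [key]
    have h1 : ‖a • (x - p σ) + b • (y - p σ)‖ ≤ a * ‖x - p σ‖ + b * ‖y - p σ‖ := by
      calc ‖a • (x - p σ) + b • (y - p σ)‖ ≤ ‖a • (x - p σ)‖ + ‖b • (y - p σ)‖ :=
            norm_add_le _ _
        _ = a * ‖x - p σ‖ + b * ‖y - p σ‖ := by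
            rw [norm_smul, norm_smul, Real.norm_eq_abs, Real.norm_eq_abs,
              abs_of_nonneg ha, abs_of_nonneg hb]
    nlinarith [norm_nonneg (x - p σ), norm_nonneg (y - p σ)]
  · -- Lipschitz
    intro σ x _ y _
    have h1 : |‖x - p σ‖ - ‖y - p σ‖| ≤ ‖(x - p σ) - (y - p σ)‖ :=
      abs_norm_sub_norm_le _ _
    have h2 : (x - p σ) - (y - p σ) = x - y := by abel
    rw [h2] at h1
    simp only [hfam]
    rw [← mul_sub, abs_mul, abs_of_pos hL]
    exact mul_le_mul_of_nonneg_left h1 hL.le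
  · -- disjoint eps-minima
    intro σ τ hne
    ext x
    simp only [Set.mem_inter_iff, Set.mem_empty_iff_false, iff_false, not_and]
    intro h1 h2
    have ha := hmin σ x h1
    have hb := hmin τ x h2
    have : ‖p σ - p τ‖ < 2 * ε / L := by
      calc ‖p σ - p τ‖ ≤ ‖p σ - x‖ + ‖x - p τ‖ := norm_sub_le_norm_sub_add_norm_sub _ _ _
        _ = ‖x - p σ‖ + ‖x - p τ‖ := by rw [norm_sub_rev]
        _ < ε / L + ε / L := by linarith
        _ = 2 * ε / L := by ring
    linarith [hsep σ τ hne]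
end

section
/- For every 1 ≤ p < ∞, every accuracy 0 < ε ≤ 1/2, and every dimension n with n ≥ ε^{−max{p,2}}, there exist a natural number M with ε^{−max{p,2}}/2 ≤ M ≤ n and a family of 2^M convex functions defined on the closed unit ball of (ℝ^n, ‖·‖_p), each Lipschitz with constant 1 with respect to ‖·‖_p, such that the sets of ε-minima of any two distinct members of the family are disjoint. -/
/-- The `L^p` norm on `ℝ^n` (for real `p`). -/
noncomputable def pNorm {n : ℕ} (p : ℝ) (x : Fin n → ℝ) : ℝ :=
  (∑ i, |x i| ^ p) ^ (1 / p)

/-- The closed unit ball of the `L^p` norm on `ℝ^n`. -/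
noncomputable def pBall (n : ℕ) (p : ℝ) : Set (Fin n → ℝ) :=
  {x | pNorm p x ≤ 1}

section Helpers

/-- sign of a boolean -/
def sg (b : Bool) : ℝ := if b then 1 else -1

lemma sg_mul_self (b : Bool) : sg b * sg b = 1 := by cases b <;> simp [sg]

lemma abs_sg (b : Bool) : |sg b| = 1 := by cases b <;> simp [sg]

lemma sg_mul_ne (b c : Bool) (h : b ≠ c) : sg b * sg c = -1 := by
  cases b <;> cases c <;> simp_all [sg]

lemma pNorm_nonneg {n : ℕ} (p : ℝ) (x : Fin n → ℝ) : 0 ≤ pNorm p x := by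
  unfold pNorm; positivity

lemma sum_abs_rpow_nonneg {n : ℕ} (p : ℝ) (x : Fin n → ℝ) : 0 ≤ ∑ i, |x i| ^ p := by
  positivity

/-- Hölder with the constant function one. -/
lemma holder_ones {ι : Type*} (s : Finset ι) (v : ι → ℝ) (hv : ∀ j, 0 ≤ v j) {q : ℝ}
    (hq : 1 ≤ q) :
    ∑ j ∈ s, v j ≤ (s.card : ℝ) ^ (1 - 1/q) * (∑ j ∈ s, v j ^ q) ^ (1/q) := by
  have := Real.inner_le_weight_mul_Lp_of_nonneg s hq (fun _ => 1) v (fun _ => zero_le_one) hv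
  simpa [one_div] using this

lemma pNorm_add_le {n : ℕ} {p : ℝ} (hp : 1 ≤ p) (x y : Fin n → ℝ) :
    pNorm p (x + y) ≤ pNorm p x + pNorm p y := by
  simpa [pNorm] using Real.Lp_add_le Finset.univ x y hp

lemma pNorm_smul {n : ℕ} {p : ℝ} (hp : 1 ≤ p) {c : ℝ} (hc : 0 ≤ c) (x : Fin n → ℝ) :
    pNorm p (c • x) = c * pNorm p x := by
  have hp0 : p ≠ 0 := by linarith
  unfold pNorm
  have h1 : ∀ i, |c * x i| ^ p = c ^ p * |x i| ^ p := by
    intro i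
    rw [abs_mul, abs_of_nonneg hc, Real.mul_rpow hc (abs_nonneg _)]
  simp only [Pi.smul_apply, smul_eq_mul, h1, ← Finset.mul_sum]
  rw [Real.mul_rpow (by positivity) (by positivity), ← Real.rpow_mul hc,
    mul_one_div, div_self hp0, Real.rpow_one]

lemma convex_pBall {n : ℕ} {p : ℝ} (hp : 1 ≤ p) : Convex ℝ (pBall n p) := by
  intro x hx y hy a b ha hb hab
  have h1 : pNorm p (a • x + b • y) ≤ a * pNorm p x + b * pNorm p y := by
    calc pNorm p (a • x + b • y) ≤ pNorm p (a • x) + pNorm p (b • y) := pNorm_add_le hp _ _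
    _ = a * pNorm p x + b * pNorm p y := by rw [pNorm_smul hp ha, pNorm_smul hp hb]
  have hx' : pNorm p x ≤ 1 := hx
  have hy' : pNorm p y ≤ 1 := hy
  have : a * pNorm p x + b * pNorm p y ≤ a * 1 + b * 1 := by gcongr
  simp only [pBall, Set.mem_setOf_eq] at *
  nlinarith [pNorm_nonneg p x, pNorm_nonneg p y]

lemma abs_coord_le_pNorm {n : ℕ} {p : ℝ} (hp : 1 ≤ p) (x : Fin n → ℝ) (k : Fin n) :
    |x k| ≤ pNorm p x := by
  have hp0 : p ≠ 0 := by linarith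
  have h1 : |x k| = (|x k| ^ p) ^ (1/p) := by
    rw [← Real.rpow_mul (abs_nonneg _), mul_one_div, div_self hp0, Real.rpow_one]
  rw [h1]
  apply Real.rpow_le_rpow (by positivity) _ (by positivity)
  exact Finset.single_le_sum (f := fun i => |x i| ^ p) (fun i _ => by positivity)
    (Finset.mem_univ k)

lemma zero_mem_pBall {n : ℕ} {p : ℝ} (hp : 1 ≤ p) : (0 : Fin n → ℝ) ∈ pBall n p := by
  have hp0 : p ≠ 0 := by linarith
  have : pNorm p (0 : Fin n → ℝ) = 0 := by
    simp [pNorm, Real.zero_rpow hp0]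
    rw [Real.zero_rpow (by simp [hp0])]
  simp [pBall, this]

end Helpers
section Framework

variable {n M : ℕ} {p ε : ℝ}

/-- Sums of functions supported on the first `M` coordinates. -/
lemma sum_castLE (hMn : M ≤ n) (f : Fin n → ℝ)
    (h0 : ∀ j : Fin n, M ≤ (j : ℕ) → f j = 0) :
    ∑ j, f j = ∑ i : Fin M, f (Fin.castLE hMn i) := by
  have hmap := Finset.sum_map Finset.univ (Fin.castLEEmb hMn) f
  simp only [Fin.coe_castLEEmb] at hmap
  rw [← hmap]
  apply (Finset.sum_subset (Finset.subset_univ _) _).symm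
  intro j _ hj
  apply h0
  by_contra hlt
  push_neg at hlt
  exact hj (Finset.mem_map.mpr ⟨⟨(j : ℕ), hlt⟩, Finset.mem_univ _, by
    simp [Fin.castLEEmb, Fin.castLE]⟩)

lemma sum_comp_castLE_le (hMn : M ≤ n) (g : Fin n → ℝ) (hg : ∀ j, 0 ≤ g j) :
    ∑ i : Fin M, g (Fin.castLE hMn i) ≤ ∑ j, g j := by
  have hmap := Finset.sum_map Finset.univ (Fin.castLEEmb hMn) g
  simp only [Fin.coe_castLEEmb] at hmap
  rw [← hmap]
  exact Finset.sum_le_sum_of_subset_of_nonneg (Finset.subset_univ _)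
    (fun j _ _ => hg j)

/-- The padding of an `M`-vector to an `n`-vector by zeros. -/
def padv (M n : ℕ) (v : Fin M → ℝ) : Fin n → ℝ :=
  fun j => if h : (j : ℕ) < M then v ⟨j, h⟩ else 0

lemma padv_castLE (hMn : M ≤ n) (v : Fin M → ℝ) (i : Fin M) :
    padv M n v (Fin.castLE hMn i) = v i := by
  simp [padv, Fin.castLE]

lemma pNorm_padv (hp : 1 ≤ p) (hMn : M ≤ n) (v : Fin M → ℝ) :
    pNorm p (padv M n v) = (∑ i : Fin M, |v i| ^ p) ^ (1/p) := by
  have hp0 : p ≠ 0 := by linarith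
  unfold pNorm
  congr 1
  rw [sum_castLE hMn _ (fun j hj => by simp [padv, Nat.not_lt.mpr hj, Real.zero_rpow hp0])]
  exact Finset.sum_congr rfl fun i _ => by rw [padv_castLE]

/-- The main framework: given a matrix `B` whose rows give `pNorm`-bounded linear
functionals, and witnesses `W s` in the unit ball on which row `i` evaluates to
`ε * sg (s i)`, we build the family of functions. -/
lemma framework (hp : 1 ≤ p) (hε : 0 < ε) (hM : 0 < M) (hMn : M ≤ n)
    (B : Fin M → Fin M → ℝ)
    (hrow : ∀ (i : Fin M) (z : Fin n → ℝ),
      |∑ j, B i j * z (Fin.castLE hMn j)| ≤ pNorm p z)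
    (W : (Fin M → Bool) → Fin M → ℝ)
    (hWnorm : ∀ s, (∑ j, |W s j| ^ p) ^ (1/p) ≤ 1)
    (hWB : ∀ s i, ∑ j, B i j * W s j = ε * sg (s i)) :
    ∃ fam : (Fin M → Bool) → (Fin n → ℝ) → ℝ,
      Function.Injective fam ∧
      (∀ s, ConvexOn ℝ (pBall n p) (fam s)) ∧
      (∀ s, ∀ x ∈ pBall n p, ∀ y ∈ pBall n p,
        |fam s x - fam s y| ≤ pNorm p (x - y)) ∧
      (∀ s t, s ≠ t →
        epsMinima (pBall n p) (fam s) ε ∩ epsMinima (pBall n p) (fam t) ε = ∅) := by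
  haveI : Nonempty (Fin M) := ⟨⟨0, hM⟩⟩
  -- the linear functionals
  set L : Fin M → (Fin n → ℝ) → ℝ := fun i x => ∑ j, B i j * x (Fin.castLE hMn j) with hL
  have hLlin : ∀ i (a b : ℝ) (x y : Fin n → ℝ),
      L i (a • x + b • y) = a * L i x + b * L i y := by
    intro i a b x y
    simp only [hL, Pi.add_apply, Pi.smul_apply, smul_eq_mul, mul_add,
      Finset.sum_add_distrib, Finset.mul_sum]
    congr 1 <;> exact Finset.sum_congr rfl fun j _ => by ring
  have hLsub : ∀ i (x y : Fin n → ℝ), L i x - L i y = L i (x - y) := by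
    intro i x y
    simp only [hL, Pi.sub_apply, mul_sub, Finset.sum_sub_distrib]
  -- the family
  set fam : (Fin M → Bool) → (Fin n → ℝ) → ℝ :=
    fun s x => Finset.univ.sup' Finset.univ_nonempty (fun i => -sg (s i) * L i x) with hfam
  have hfam_le : ∀ s x i, -sg (s i) * L i x ≤ fam s x := by
    intro s x i
    simp only [hfam]
    exact Finset.le_sup' (fun i => -sg (s i) * L i x) (Finset.mem_univ i)
  have hfam_lub : ∀ s x c, (∀ i, -sg (s i) * L i x ≤ c) → fam s x ≤ c := by
    intro s x c h
    simp only [hfam]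
    exact Finset.sup'_le _ _ fun i _ => h i
  -- witnesses
  have hwball : ∀ s, padv M n (W s) ∈ pBall n p := by
    intro s
    show pNorm p (padv M n (W s)) ≤ 1
    rw [pNorm_padv hp hMn]
    exact hWnorm s
  have hLw : ∀ s i, L i (padv M n (W s)) = ε * sg (s i) := by
    intro s i
    rw [← hWB s i]
    exact Finset.sum_congr rfl fun j _ => by rw [padv_castLE]
  have hfamw : ∀ s, fam s (padv M n (W s)) = -ε := by
    intro s
    have hterm : ∀ i : Fin M, -sg (s i) * L i (padv M n (W s)) = -ε := by
      intro i
      rw [hLw s i]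
      cases hsi : s i <;> simp [sg] <;> ring
    apply le_antisymm
    · exact hfam_lub _ _ _ (fun i => le_of_eq (hterm i))
    · exact le_trans (le_of_eq (hterm ⟨0, hM⟩).symm) (hfam_le s _ ⟨0, hM⟩)
  -- lower bound / bddBelow
  have hfam_lb : ∀ s x, x ∈ pBall n p → -1 ≤ fam s x := by
    intro s x hx
    have i0 : Fin M := ⟨0, hM⟩
    refine le_trans ?_ (hfam_le s x i0)
    have h1 : |L i0 x| ≤ pNorm p x := hrow i0 x
    have h2 : pNorm p x ≤ 1 := hx
    have h3 : -sg (s i0) * L i0 x ≥ -|L i0 x| := by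
      rcases abs_cases (L i0 x) with ⟨h, _⟩ | ⟨h, _⟩ <;> cases hsi : s i0 <;>
        simp [sg] <;> nlinarith [abs_nonneg (L i0 x), le_abs_self (L i0 x),
          neg_abs_le (L i0 x)]
    nlinarith [abs_nonneg (L i0 x)]
  have hbdd : ∀ s, BddBelow (fam s '' pBall n p) := by
    intro s
    exact ⟨-1, fun y hy => by obtain ⟨x, hx, rfl⟩ := hy; exact hfam_lb s x hx⟩
  have hsInf : ∀ s, sInf (fam s '' pBall n p) ≤ -ε := by
    intro s
    rw [← hfamw s]
    exact csInf_le (hbdd s) ⟨padv M n (W s), hwball s, rfl⟩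
  refine ⟨fam, ?_, ?_, ?_, ?_⟩
  · -- injectivity
    intro s t hst
    by_contra hne
    obtain ⟨i, hi⟩ := Function.ne_iff.mp hne
    have h1 : fam s (padv M n (W s)) = -ε := hfamw s
    have h2 : fam t (padv M n (W s)) = fam s (padv M n (W s)) := by rw [hst]
    have h3 : ε ≤ fam t (padv M n (W s)) := by
      refine le_trans ?_ (hfam_le t (padv M n (W s)) i)
      rw [hLw s i]
      have hmm : sg (t i) * sg (s i) = -1 := sg_mul_ne _ _ (Ne.symm hi)
      nlinarith
    rw [h2, h1] at h3
    linarith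
  · -- convexity
    intro s
    refine ⟨convex_pBall hp, ?_⟩
    intro x _ y _ a b ha hb hab
    apply hfam_lub
    intro i
    rw [hLlin i a b x y]
    have h1 : -sg (s i) * L i x ≤ fam s x := hfam_le s x i
    have h2 : -sg (s i) * L i y ≤ fam s y := hfam_le s y i
    calc -sg (s i) * (a * L i x + b * L i y)
        = a * (-sg (s i) * L i x) + b * (-sg (s i) * L i y) := by ring
      _ ≤ a * fam s x + b * fam s y := by gcongr
      _ = a • fam s x + b • fam s y := by simp [smul_eq_mul]
  · -- Lipschitz
    intro s x _ y _
    have key : ∀ u v : Fin n → ℝ, fam s u - fam s v ≤ pNorm p (u - v) := by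
      intro u v
      rw [sub_le_iff_le_add]
      apply hfam_lub
      intro i
      have h1 : -sg (s i) * L i u = -sg (s i) * L i v + -sg (s i) * (L i u - L i v) := by ring
      rw [h1, hLsub]
      have h2 : -sg (s i) * L i (u - v) ≤ |L i (u - v)| := by
        rcases abs_cases (L i (u - v)) with ⟨h, _⟩ | ⟨h, _⟩ <;> cases hsi : s i <;>
          simp [sg] <;> linarith [le_abs_self (L i (u - v)), neg_abs_le (L i (u - v))]
      have h3 : |L i (u - v)| ≤ pNorm p (u - v) := hrow i (u - v)
      have h4 : -sg (s i) * L i v ≤ fam s v := hfam_le s v i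
      linarith
    have h1 := key x y
    have h2 := key y x
    rw [abs_sub_le_iff]
    constructor
    · exact h1
    · have hsym : pNorm p (y - x) = pNorm p (x - y) := by
        unfold pNorm
        congr 1
        exact Finset.sum_congr rfl fun j _ => by
          simp only [Pi.sub_apply]
          rw [abs_sub_comm]
      linarith
  · -- disjoint ε-minima
    intro s t hst
    ext x
    simp only [Set.mem_inter_iff, Set.mem_empty_iff_false, iff_false, not_and]
    intro hxs hxt
    obtain ⟨hx1, hx2⟩ := hxs
    obtain ⟨_, hx4⟩ := hxt
    obtain ⟨i, hi⟩ := Function.ne_iff.mp hst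
    have hs0 : fam s x < 0 := by linarith [hsInf s, hx2]
    have ht0 : fam t x < 0 := by linarith [hsInf t, hx4]
    have h1 : -sg (s i) * L i x ≤ fam s x := hfam_le s x i
    have h2 : -sg (t i) * L i x ≤ fam t x := hfam_le t x i
    have h3 : sg (s i) * sg (t i) = -1 := sg_mul_ne _ _ hi
    have h4 : -sg (t i) * L i x = sg (s i) * L i x := by
      linear_combination (-L i x * sg (s i)) * h3 + (L i x * sg (t i)) * sg_mul_self (s i)
    nlinarith

end Framework
section Hadamard

/-- The `±1` Hadamard character. -/
def Hf {m : ℕ} (u v : Fin m → Bool) : ℝ := ∏ k, (if u k && v k then (-1:ℝ) else 1)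

lemma abs_Hf {m : ℕ} (u v : Fin m → Bool) : |Hf u v| = 1 := by
  unfold Hf
  rw [Finset.abs_prod]
  apply Finset.prod_eq_one
  intro k _
  split <;> simp

lemma Hf_orth {m : ℕ} (u u' : Fin m → Bool) :
    ∑ v : Fin m → Bool, Hf u v * Hf u' v = if u = u' then ((2:ℝ)^m) else 0 := by
  have hterm : ∀ v : Fin m → Bool, Hf u v * Hf u' v =
      ∏ k, ((if u k && v k then (-1:ℝ) else 1) * (if u' k && v k then (-1:ℝ) else 1)) := by
    intro v
    rw [Finset.prod_mul_distrib]
    rfl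
  simp_rw [hterm]
  rw [← Fintype.prod_sum (fun k (b : Bool) =>
    (if u k && b then (-1:ℝ) else 1) * (if u' k && b then (-1:ℝ) else 1))]
  have hfac : ∀ k, (∑ b : Bool, (if u k && b then (-1:ℝ) else 1) *
      (if u' k && b then (-1:ℝ) else 1)) = if u k = u' k then 2 else 0 := by
    intro k
    cases hu : u k <;> cases hu' : u' k <;> simp [Fintype.sum_bool] <;> norm_num
  simp_rw [hfac]
  by_cases huu : u = u'
  · subst huu
    simp [Finset.prod_const]
  · rw [if_neg huu]
    obtain ⟨k, hk⟩ := Function.ne_iff.mp huu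
    exact Finset.prod_eq_zero (Finset.mem_univ k) (by rw [if_neg hk])

end Hadamard
section Instantiations

variable {n M : ℕ} {p ε : ℝ}

/-- Identity construction, used for `p ≥ 2`. -/
lemma inst_identity (hp : 1 ≤ p) (hε : 0 < ε) (hM : 0 < M) (hMn : M ≤ n)
    (hbound : (M : ℝ) * ε ^ p ≤ 1) :
    ∃ fam : (Fin M → Bool) → (Fin n → ℝ) → ℝ,
      Function.Injective fam ∧
      (∀ s, ConvexOn ℝ (pBall n p) (fam s)) ∧
      (∀ s, ∀ x ∈ pBall n p, ∀ y ∈ pBall n p,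
        |fam s x - fam s y| ≤ pNorm p (x - y)) ∧
      (∀ s t, s ≠ t →
        epsMinima (pBall n p) (fam s) ε ∩ epsMinima (pBall n p) (fam t) ε = ∅) := by
  have hp0 : p ≠ 0 := by linarith
  apply framework hp hε hM hMn (fun i j => if j = i then (1:ℝ) else 0)
    (W := fun s j => ε * sg (s j))
  · intro i z
    have h1 : ∑ j, (if j = i then (1:ℝ) else 0) * z (Fin.castLE hMn j)
        = z (Fin.castLE hMn i) := by
      simp only [ite_mul, one_mul, zero_mul]
      rw [Finset.sum_ite_eq' Finset.univ i (fun j => z (Fin.castLE hMn j))]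
      simp
    rw [h1]
    exact abs_coord_le_pNorm hp z _
  · intro s
    have h1 : ∀ j : Fin M, |ε * sg (s j)| ^ p = ε ^ p := by
      intro j
      rw [abs_mul, abs_sg, mul_one, abs_of_pos hε]
    simp only [h1, Finset.sum_const, Finset.card_univ, Fintype.card_fin, nsmul_eq_mul]
    calc ((M : ℝ) * ε ^ p) ^ (1/p) ≤ (1:ℝ) ^ (1/p) :=
          Real.rpow_le_rpow (by positivity) hbound (by positivity)
      _ = 1 := Real.one_rpow _
  · intro s i
    simp only [ite_mul, one_mul, zero_mul]
    rw [Finset.sum_ite_eq' Finset.univ i (fun j => ε * sg (s j))]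
    simp

/-- Hadamard construction, used for `p ≤ 2`. -/
lemma inst_hadamard {m : ℕ} (hp : 1 ≤ p) (hp2 : p ≤ 2) (hε : 0 < ε)
    (hMn : 2^m ≤ n) (hbound : ε * ((2^m : ℕ) : ℝ) ^ ((1:ℝ)/2) ≤ 1) :
    ∃ fam : (Fin (2^m) → Bool) → (Fin n → ℝ) → ℝ,
      Function.Injective fam ∧
      (∀ s, ConvexOn ℝ (pBall n p) (fam s)) ∧
      (∀ s, ∀ x ∈ pBall n p, ∀ y ∈ pBall n p,
        |fam s x - fam s y| ≤ pNorm p (x - y)) ∧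
      (∀ s t, s ≠ t →
        epsMinima (pBall n p) (fam s) ε ∩ epsMinima (pBall n p) (fam t) ε = ∅) := by
  set M := 2^m with hMdef
  have hp0 : (0:ℝ) < p := by linarith
  have hM : 0 < M := Nat.pow_pos (by norm_num)
  have hMR : (0:ℝ) < (M:ℝ) := by exact_mod_cast hM
  have hMR0 : (M:ℝ) ≠ 0 := ne_of_gt hMR
  -- the equivalence
  have hcard : Fintype.card (Fin m → Bool) = M := by
    simp [hMdef]
  let e : Fin M ≃ (Fin m → Bool) := (Fintype.equivFinOfCardEq hcard).symm
  set c1 : ℝ := (M:ℝ) ^ (1/p - 1) with hc1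
  have hc1pos : 0 < c1 := Real.rpow_pos_of_pos hMR _
  -- column sums
  set us : (Fin M → Bool) → Fin M → ℝ :=
    fun s j => ∑ i, sg (s i) * Hf (e i) (e j) with hus
  -- orthogonality transported along e
  have horth : ∀ i i' : Fin M,
      ∑ j, Hf (e i) (e j) * Hf (e i') (e j) = if i' = i then (M:ℝ) else 0 := by
    intro i i'
    have h1 : ∑ j : Fin M, Hf (e i) (e j) * Hf (e i') (e j)
        = ∑ v : Fin m → Bool, Hf (e i) v * Hf (e i') v :=
      Equiv.sum_comp e (fun v => Hf (e i) v * Hf (e i') v)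
    rw [h1, Hf_orth]
    have : (e i = e i') ↔ (i' = i) := by
      constructor
      · intro h; exact (e.injective h).symm
      · intro h; rw [h]
    by_cases hii : i' = i
    · rw [if_pos hii, if_pos (this.mpr hii)]
      push_cast [hMdef]
      norm_num
    · rw [if_neg hii, if_neg (fun h => hii (this.mp h))]
  -- key inner products
  have hBW : ∀ (s : Fin M → Bool) (i : Fin M),
      ∑ j, (c1 * Hf (e i) (e j)) * (ε * (M:ℝ) ^ (-(1/p)) * us s j) = ε * sg (s i) := by
    intro s i
    have h1 : ∀ j, (c1 * Hf (e i) (e j)) * (ε * (M:ℝ) ^ (-(1/p)) * us s j)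
        = (c1 * ε * (M:ℝ) ^ (-(1/p))) * (Hf (e i) (e j) * us s j) := by
      intro j; ring
    simp only [h1, ← Finset.mul_sum]
    have h2 : ∑ j, Hf (e i) (e j) * us s j = (M:ℝ) * sg (s i) := by
      have h3 : ∀ j, Hf (e i) (e j) * us s j
          = ∑ i', sg (s i') * (Hf (e i) (e j) * Hf (e i') (e j)) := by
        intro j
        rw [hus, Finset.mul_sum]
        exact Finset.sum_congr rfl fun i' _ => by ring
      simp only [h3]
      rw [Finset.sum_comm]
      have h4 : ∀ i', ∑ j, sg (s i') * (Hf (e i) (e j) * Hf (e i') (e j))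
          = sg (s i') * (if i' = i then (M:ℝ) else 0) := by
        intro i'
        rw [← Finset.mul_sum, horth]
      simp only [h4]
      have h5 : ∀ i', sg (s i') * (if i' = i then (M:ℝ) else 0)
          = if i' = i then sg (s i') * (M:ℝ) else 0 := by
        intro i'; split <;> simp
      simp only [h5]
      rw [Finset.sum_ite_eq' Finset.univ i (fun i' => sg (s i') * (M:ℝ))]
      simp [mul_comm]
    rw [h2]
    have hconst : c1 * (M:ℝ) ^ (-(1/p)) * (M:ℝ) = 1 := by
      rw [hc1, ← Real.rpow_add hMR]
      have : (1/p - 1) + -(1/p) = -1 := by ring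
      rw [this, Real.rpow_neg_one]
      exact inv_mul_cancel₀ hMR0
    calc c1 * ε * (M:ℝ) ^ (-(1/p)) * ((M:ℝ) * sg (s i))
        = (c1 * (M:ℝ) ^ (-(1/p)) * (M:ℝ)) * (ε * sg (s i)) := by ring
      _ = ε * sg (s i) := by rw [hconst, one_mul]
  -- norm of the witness
  have husq : ∀ s, ∑ j, us s j * us s j = (M:ℝ) * (M:ℝ) := by
    intro s
    have h1 : ∀ j, us s j * us s j
        = ∑ i, ∑ i', (sg (s i) * sg (s i')) * (Hf (e i) (e j) * Hf (e i') (e j)) := by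
      intro j
      rw [hus, Finset.sum_mul_sum]
      exact Finset.sum_congr rfl fun i _ => Finset.sum_congr rfl fun i' _ => by ring
    simp only [h1]
    rw [Finset.sum_comm]
    have h2 : ∀ i, ∑ j, ∑ i', (sg (s i) * sg (s i')) * (Hf (e i) (e j) * Hf (e i') (e j))
        = (M:ℝ) := by
      intro i
      rw [Finset.sum_comm]
      have h3 : ∀ i', ∑ j, (sg (s i) * sg (s i')) * (Hf (e i) (e j) * Hf (e i') (e j))
          = (sg (s i) * sg (s i')) * (if i' = i then (M:ℝ) else 0) := by
        intro i'
        rw [← Finset.mul_sum, horth]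
      simp only [h3]
      have h4 : ∀ i', (sg (s i) * sg (s i')) * (if i' = i then (M:ℝ) else 0)
          = if i' = i then (sg (s i) * sg (s i')) * (M:ℝ) else 0 := by
        intro i'; split <;> simp
      simp only [h4]
      rw [Finset.sum_ite_eq' Finset.univ i (fun i' => (sg (s i) * sg (s i')) * (M:ℝ))]
      simp [sg_mul_self]
    simp only [h2]
    simp [Finset.sum_const, Finset.card_univ]
  apply framework hp hε hM hMn (fun i j => c1 * Hf (e i) (e j))
    (W := fun s j => ε * (M:ℝ) ^ (-(1/p)) * us s j)
  · -- row bound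
    intro i z
    set S : ℝ := (∑ j : Fin n, |z j| ^ p) ^ (1/p) with hS
    have hSnn : 0 ≤ S := by rw [hS]; positivity
    have h1 : |∑ j, (c1 * Hf (e i) (e j)) * z (Fin.castLE hMn j)|
        ≤ ∑ j : Fin M, c1 * |z (Fin.castLE hMn j)| := by
      refine le_trans (Finset.abs_sum_le_sum_abs _ _) (Finset.sum_le_sum fun j _ => ?_)
      rw [abs_mul, abs_mul, abs_Hf, mul_one, abs_of_pos hc1pos]
    have h2 : ∑ j : Fin M, |z (Fin.castLE hMn j)|
        ≤ (M:ℝ) ^ (1 - 1/p) * (∑ j : Fin M, |z (Fin.castLE hMn j)| ^ p) ^ (1/p) := by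
      have := holder_ones Finset.univ (fun j : Fin M => |z (Fin.castLE hMn j)|)
        (fun j => abs_nonneg _) hp
      simpa [Finset.card_univ] using this
    have h3 : ∑ j : Fin M, |z (Fin.castLE hMn j)| ^ p ≤ ∑ j : Fin n, |z j| ^ p :=
      sum_comp_castLE_le hMn (fun j => |z j| ^ p) (fun j => by positivity)
    have h4 : (∑ j : Fin M, |z (Fin.castLE hMn j)| ^ p) ^ (1/p) ≤ S := by
      rw [hS]
      exact Real.rpow_le_rpow (by positivity) h3 (by positivity)
    have h5 : c1 * ((M:ℝ) ^ (1 - 1/p) * S) = S := by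
      rw [hc1, ← mul_assoc, ← Real.rpow_add hMR]
      have : (1/p - 1) + (1 - 1/p) = 0 := by ring
      rw [this, Real.rpow_zero, one_mul]
    calc |∑ j, (c1 * Hf (e i) (e j)) * z (Fin.castLE hMn j)|
        ≤ ∑ j : Fin M, c1 * |z (Fin.castLE hMn j)| := h1
      _ = c1 * ∑ j : Fin M, |z (Fin.castLE hMn j)| := by rw [Finset.mul_sum]
      _ ≤ c1 * ((M:ℝ) ^ (1 - 1/p) * S) := by
          apply mul_le_mul_of_nonneg_left _ hc1pos.le
          calc ∑ j : Fin M, |z (Fin.castLE hMn j)|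
              ≤ (M:ℝ) ^ (1 - 1/p) * (∑ j : Fin M, |z (Fin.castLE hMn j)| ^ p) ^ (1/p) := h2
            _ ≤ (M:ℝ) ^ (1 - 1/p) * S := by
                apply mul_le_mul_of_nonneg_left h4 (by positivity)
      _ = S := h5
  · -- witness norm
    intro s
    have hq : (1:ℝ) ≤ 2/p := by
      rw [le_div_iff₀ hp0]
      linarith
    set d : ℝ := ε * (M:ℝ) ^ (-(1/p)) with hd
    have hdpos : 0 < d := by
      rw [hd]
      exact mul_pos hε (Real.rpow_pos_of_pos hMR _)
    have habs : ∀ j, |d * us s j| ^ p = d ^ p * |us s j| ^ p := by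
      intro j
      rw [abs_mul, abs_of_pos hdpos, Real.mul_rpow hdpos.le (abs_nonneg _)]
    have hhold : ∑ j, |us s j| ^ p
        ≤ (M:ℝ) ^ (1 - p/2) * (∑ j, (|us s j| ^ p) ^ (2/p)) ^ (p/2) := by
      have := holder_ones Finset.univ (fun j : Fin M => |us s j| ^ p)
        (fun j => by positivity) hq
      have hconv : 1 - 1/(2/p) = 1 - p/2 := by rw [one_div_div]
      have hconv2 : 1/(2/p) = p/2 := by rw [one_div_div]
      rw [hconv, hconv2] at this
      simpa [Finset.card_univ] using this
    have hsq : ∀ j, (|us s j| ^ p) ^ (2/p) = us s j * us s j := by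
      intro j
      rw [← Real.rpow_mul (abs_nonneg _)]
      have : p * (2/p) = 2 := by field_simp
      rw [this, show (2:ℝ) = ((2:ℕ):ℝ) by norm_num, Real.rpow_natCast, sq_abs, sq]
    have hMM : ((M:ℝ) * (M:ℝ)) ^ ((p:ℝ)/2) = (M:ℝ) ^ p := by
      rw [show (M:ℝ) * (M:ℝ) = (M:ℝ) ^ (2:ℝ) by rw [Real.rpow_two]; ring,
        ← Real.rpow_mul hMR.le]
      rw [show (2:ℝ) * (p/2) = p by ring]
    have hsum : ∑ j, |d * us s j| ^ p ≤ ε ^ p * (M:ℝ) ^ (p/2) := by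
      have h6 : ∑ j, |d * us s j| ^ p = d ^ p * ∑ j, |us s j| ^ p := by
        simp only [habs, ← Finset.mul_sum]
      rw [h6]
      have h7 : ∑ j, |us s j| ^ p ≤ (M:ℝ) ^ (1 - p/2) * (M:ℝ) ^ p := by
        calc ∑ j, |us s j| ^ p
            ≤ (M:ℝ) ^ (1 - p/2) * (∑ j, (|us s j| ^ p) ^ (2/p)) ^ (p/2) := hhold
          _ = (M:ℝ) ^ (1 - p/2) * (M:ℝ) ^ p := by
              simp only [hsq]
              rw [husq s, hMM]
      have hdp : d ^ p = ε ^ p * (M:ℝ) ^ (-(1/p) * p) := by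
        rw [hd, Real.mul_rpow hε.le (Real.rpow_pos_of_pos hMR _).le,
          ← Real.rpow_mul hMR.le]
      calc d ^ p * ∑ j, |us s j| ^ p
          ≤ d ^ p * ((M:ℝ) ^ (1 - p/2) * (M:ℝ) ^ p) := by
            apply mul_le_mul_of_nonneg_left h7 (by positivity)
        _ = ε ^ p * (M:ℝ) ^ (p/2) := by
            have hpne : p ≠ 0 := ne_of_gt hp0
            rw [hdp, show -(1/p) * p = -1 by field_simp]
            rw [show ε ^ p * (M:ℝ) ^ (-1:ℝ) * ((M:ℝ) ^ (1 - p/2) * (M:ℝ) ^ p)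
              = ε ^ p * ((M:ℝ) ^ (-1:ℝ) * (M:ℝ) ^ (1 - p/2) * (M:ℝ) ^ p) from by ring]
            rw [← Real.rpow_add hMR, ← Real.rpow_add hMR]
            congr 1
            ring
    calc (∑ j, |d * us s j| ^ p) ^ (1/p)
        ≤ (ε ^ p * (M:ℝ) ^ (p/2)) ^ (1/p) := by
          apply Real.rpow_le_rpow (by positivity) hsum (by positivity)
      _ = ε * (M:ℝ) ^ ((1:ℝ)/2) := by
          rw [Real.mul_rpow (by positivity) (by positivity),
            ← Real.rpow_mul hε.le, ← Real.rpow_mul hMR.le]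
          rw [show p * (1/p) = 1 by field_simp, Real.rpow_one]
          congr 2
          field_simp
      _ ≤ 1 := by
          have : ((M:ℕ):ℝ) = ((2^m : ℕ):ℝ) := by rw [hMdef]
          rw [this]
          exact hbound
  · -- witness equations
    intro s i
    exact hBW s i

end Instantiations
section Main

lemma four_le_rpow_neg {ε r : ℝ} (hε : 0 < ε) (hε' : ε ≤ 1/2) (hr : 2 ≤ r) :
    (4:ℝ) ≤ ε ^ (-r) := by
  have h2 : (2:ℝ) ≤ ε⁻¹ := by
    rw [show (2:ℝ) = (1/2)⁻¹ by norm_num]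
    exact inv_anti₀ hε hε'
  have hrw : ε ^ (-r) = (ε⁻¹) ^ r := by
    rw [Real.rpow_neg hε.le, ← Real.inv_rpow hε.le]
  rw [hrw]
  calc (4:ℝ) = (2:ℝ) ^ (2:ℝ) := by rw [Real.rpow_two]; norm_num
    _ ≤ (2:ℝ) ^ r := Real.rpow_le_rpow_of_exponent_le one_le_two hr
    _ ≤ (ε⁻¹) ^ r := Real.rpow_le_rpow (by norm_num) h2 (by linarith)

/-- for `1 ≤ p < ∞`, `0 < ε ≤ 1/2` and `n ≥ ε^{-max{p,2}}`,
there are `M` with `ε^{-max{p,2}}/2 ≤ M ≤ n` and a family of `2^M` convex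
`1`-Lipschitz (w.r.t. `‖·‖_p`) functions on the unit `L^p`-ball whose sets of
ε-minima are pairwise disjoint. -/
theorem lp_ball_packing_family (p : ℝ) (hp : 1 ≤ p) (ε : ℝ)
    (hε : 0 < ε) (hε' : ε ≤ 1 / 2) (n : ℕ) (hn : ε ^ (-(max p 2)) ≤ (n : ℝ)) :
    ∃ M : ℕ, ε ^ (-(max p 2)) / 2 ≤ (M : ℝ) ∧ M ≤ n ∧
      ∃ fam : (Fin M → Bool) → (Fin n → ℝ) → ℝ,
        Function.Injective fam ∧
        (∀ s, ConvexOn ℝ (pBall n p) (fam s)) ∧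
        (∀ s, ∀ x ∈ pBall n p, ∀ y ∈ pBall n p,
          |fam s x - fam s y| ≤ pNorm p (x - y)) ∧
        (∀ s t, s ≠ t →
          epsMinima (pBall n p) (fam s) ε ∩ epsMinima (pBall n p) (fam t) ε = ∅) := by
  rcases le_total p 2 with hp2 | hp2
  · -- p ≤ 2 : Hadamard construction
    have hr : max p 2 = 2 := max_eq_right hp2
    rw [hr] at hn ⊢
    set X : ℝ := ε ^ (-(2:ℝ)) with hX
    have hX4 : (4:ℝ) ≤ X := four_le_rpow_neg hε hε' le_rfl
    set N : ℕ := ⌊X⌋₊ with hN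
    have hN4 : 4 ≤ N := Nat.le_floor (by exact_mod_cast hX4)
    have hN0 : N ≠ 0 := by omega
    set m : ℕ := Nat.log 2 N with hm
    have hMN : 2^m ≤ N := Nat.pow_log_le_self 2 hN0
    have hMX : ((2^m : ℕ):ℝ) ≤ X :=
      le_trans (by exact_mod_cast hMN) (Nat.floor_le (by positivity))
    have hMn : 2^m ≤ n := by
      have : ((2^m : ℕ):ℝ) ≤ (n:ℝ) := hMX.trans hn
      exact_mod_cast this
    have hlow : X/2 ≤ ((2^m : ℕ):ℝ) := by
      have h1 : N < 2^(m+1) := Nat.lt_pow_succ_log_self (by norm_num) N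
      have h2 : X < (N:ℝ) + 1 := Nat.lt_floor_add_one X
      have h3 : (N:ℝ) + 1 ≤ 2 * ((2^m : ℕ):ℝ) := by
        have h4 : N + 1 ≤ 2^(m+1) := h1
        calc (N:ℝ) + 1 ≤ ((2^(m+1):ℕ):ℝ) := by exact_mod_cast h4
          _ = 2 * ((2^m : ℕ):ℝ) := by push_cast [pow_succ]; ring
      linarith
    have hbound : ε * ((2^m : ℕ) : ℝ) ^ ((1:ℝ)/2) ≤ 1 := by
      have hX12 : X ^ ((1:ℝ)/2) = ε⁻¹ := by
        rw [hX, ← Real.rpow_mul hε.le, show (-(2:ℝ)) * (1/2) = -1 by norm_num,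
          Real.rpow_neg_one]
      have h5 : ((2^m:ℕ):ℝ) ^ ((1:ℝ)/2) ≤ ε⁻¹ := by
        rw [← hX12]
        exact Real.rpow_le_rpow (by positivity) hMX (by norm_num)
      calc ε * ((2^m : ℕ) : ℝ) ^ ((1:ℝ)/2) ≤ ε * ε⁻¹ :=
            mul_le_mul_of_nonneg_left h5 hε.le
        _ = 1 := mul_inv_cancel₀ (ne_of_gt hε)
    exact ⟨2^m, hlow, hMn, inst_hadamard hp hp2 hε hMn hbound⟩
  · -- 2 ≤ p : identity construction
    have hr : max p 2 = p := max_eq_left hp2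
    rw [hr] at hn ⊢
    set X : ℝ := ε ^ (-p) with hX
    have hX4 : (4:ℝ) ≤ X := four_le_rpow_neg hε hε' hp2
    set M : ℕ := ⌈X/2⌉₊ with hM
    have hc1 : X/2 ≤ (M:ℝ) := Nat.le_ceil _
    have hMle : (M:ℝ) ≤ X := by
      have h := Nat.ceil_lt_add_one (show (0:ℝ) ≤ X/2 by positivity)
      rw [← hM] at h
      linarith
    have hMn : M ≤ n := by
      have : (M:ℝ) ≤ (n:ℝ) := hMle.trans hn
      exact_mod_cast this
    have hMpos : 0 < M := Nat.ceil_pos.mpr (by linarith)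
    have hbound : (M:ℝ) * ε ^ p ≤ 1 := by
      have h1 : ε ^ (-p) * ε ^ p = 1 := by
        rw [← Real.rpow_add hε]
        norm_num
      have h2 : (M:ℝ) * ε ^ p ≤ ε ^ (-p) * ε ^ p := by
        apply mul_le_mul_of_nonneg_right hMle (by positivity)
      rw [h1] at h2
      exact h2
    exact ⟨M, hc1, hMn, inst_identity hp hε hMpos hMn hbound⟩

end Main
end

section
/- For every natural number M there exists a Nemirovski family of depth M. -/
noncomputable def bSeq : ℕ → ℝ
  | 0 => 1
  | l + 1 => bSeq l - 2 * (4:ℝ)⁻¹ ^ (l + 1) * (2:ℝ)⁻¹ ^ l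

/-- A Nemirovski family of depth `M`: functions `f s : ℝ → ℝ` and intervals
`[lo s, hi s] ⊆ [-1,1]` indexed by binary strings `s` (of length ≤ M),
satisfying properties (F-1)–(F-5). -/
structure NemirovskiFamily (M : ℕ) where
  f : List Bool → ℝ → ℝ
  lo : List Bool → ℝ
  hi : List Bool → ℝ
  f_nil : ∀ x ∈ Set.Icc (-1:ℝ) 1, f [] x = |x|
  lo_nil : lo [] = -1
  hi_nil : hi [] = 1
  convexOn : ∀ s : List Bool, s.length ≤ M → ConvexOn ℝ (Set.Icc (-1:ℝ) 1) (f s)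
  lipschitz : ∀ s : List Bool, s.length ≤ M → LipschitzOnWith 1 (f s) (Set.Icc (-1:ℝ) 1)
  length_eq : ∀ s : List Bool, s.length ≤ M → hi s - lo s = 2 * (4:ℝ)⁻¹ ^ s.length
  interior_disjoint : ∀ s t : List Bool, s.length ≤ M → t.length ≤ M →
    ¬ s <+: t → ¬ t <+: s → Set.Ioo (lo s) (hi s) ∩ Set.Ioo (lo t) (hi t) = ∅
  nested : ∀ s t : List Bool, s.length ≤ M → t <+: s →
    Set.Icc (lo s) (hi s) ⊆ Set.Icc (lo t) (hi t)
  mono : ∀ s t : List Bool, s.length ≤ M → t <+: s →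
    ∀ x ∈ Set.Icc (-1:ℝ) 1, f t x ≤ f s x
  eq_outside : ∀ s t : List Bool, s.length ≤ M → t <+: s →
    ∀ x ∈ Set.Icc (-1:ℝ) 1, x ∉ Set.Ioo (lo t) (hi t) → f s x = f t x
  shape : ∀ s : List Bool, s.length ≤ M → ∀ x ∈ Set.Icc (lo s) (hi s),
    f s x = bSeq s.length - (2:ℝ)⁻¹ ^ (3 * s.length) + (2:ℝ)⁻¹ ^ s.length * |x - (lo s + hi s) / 2|
  level : ∀ s t : List Bool, s.length ≤ M → t <+: s →
    ∀ x ∈ Set.Icc (-1:ℝ) 1, (f s x < bSeq t.length ↔ x ∈ Set.Ioo (lo t) (hi t))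

/-! ### Auxiliary construction -/

open scoped NNReal in
lemma _nnreal_dummy : (1:ℝ≥0) = 1 := rfl

noncomputable def eB (b : Bool) : ℝ := if b then 1 else -1

lemma eB_mem (b : Bool) : -1 ≤ eB b ∧ eB b ≤ 1 := by cases b <;> norm_num [eB]

noncomputable def loF : List Bool → ℝ
  | [] => -1
  | b :: s => (loF s + eB b) / 4

noncomputable def hiF : List Bool → ℝ
  | [] => 1
  | b :: s => (hiF s + eB b) / 4

noncomputable def fF : List Bool → ℝ → ℝ
  | [], x => |x|
  | b :: s, x => max |x| (fF s (4 * x - eB b) / 8 + 3/8)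

lemma bSeq_closed (n : ℕ) : bSeq n = 3/7 + 4/7 * (8:ℝ)⁻¹ ^ n := by
  induction n with
  | zero => norm_num [bSeq]
  | succ n ih =>
    have h48 : (4:ℝ)⁻¹ ^ n * (2:ℝ)⁻¹ ^ n = (8:ℝ)⁻¹ ^ n := by
      rw [← mul_pow]; norm_num
    rw [bSeq, ih, pow_succ, pow_succ]
    linear_combination (-(1:ℝ)/2) * h48

lemma pow8_le_one (n : ℕ) : (8:ℝ)⁻¹ ^ n ≤ 1 :=
  pow_le_one₀ (by norm_num) (by norm_num)

lemma pow8_pos (n : ℕ) : 0 < (8:ℝ)⁻¹ ^ n := by positivity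

lemma bSeq_rec8 (n : ℕ) : bSeq (n+1) = bSeq n / 8 + 3/8 := by
  rw [bSeq_closed, bSeq_closed, pow_succ]; ring

lemma bSeq_step_ge (n : ℕ) : (bSeq n + 1)/4 ≤ bSeq (n+1) := by
  rw [bSeq_closed, bSeq_closed, pow_succ]
  have h1 := pow8_le_one n
  nlinarith [pow8_pos n]

lemma boundsF : ∀ s : List Bool, -1 ≤ loF s ∧ hiF s ≤ 1 ∧ loF s < hiF s := by
  intro s; induction s with
  | nil => norm_num [loF, hiF]
  | cons b s ih =>
    obtain ⟨h1, h2, h3⟩ := ih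
    obtain ⟨e1, e2⟩ := eB_mem b
    refine ⟨?_, ?_, ?_⟩ <;> simp only [loF, hiF] <;> linarith

lemma lengthF : ∀ s : List Bool, hiF s - loF s = 2 * (4:ℝ)⁻¹ ^ s.length := by
  intro s; induction s with
  | nil => norm_num [loF, hiF]
  | cons b s ih =>
    simp only [loF, hiF, List.length_cons, pow_succ]
    linarith

lemma hiloF_b : ∀ s : List Bool, hiF s ≤ bSeq s.length ∧ -bSeq s.length ≤ loF s := by
  intro s; induction s with
  | nil => norm_num [loF, hiF, bSeq]
  | cons b s ih =>
    obtain ⟨h1, h2⟩ := ih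
    obtain ⟨e1, e2⟩ := eB_mem b
    have hk := bSeq_step_ge s.length
    constructor <;> simp only [loF, hiF, List.length_cons] <;> linarith

lemma abs_le_fF : ∀ (s : List Bool) (x : ℝ), |x| ≤ fF s x := by
  intro s x; cases s with
  | nil => simp [fF]
  | cons b s => simp only [fF]; exact le_max_left _ _

lemma fF_eq_abs : ∀ (s : List Bool) (x : ℝ), 1 ≤ |x| → fF s x = |x| := by
  intro s; induction s with
  | nil => intro x _; simp [fF]
  | cons b s ih =>
    intro x hx
    obtain ⟨e1, e2⟩ := eB_mem b
    have key : fF s (4*x - eB b) / 8 + 3/8 ≤ |x| := by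
      rcases le_abs.mp hx with h | h
      · have hy : (0:ℝ) < 4*x - eB b := by linarith
        rw [ih _ (by rw [abs_of_pos hy]; linarith), abs_of_pos hy,
          abs_of_nonneg (by linarith : (0:ℝ) ≤ x)]
        linarith
      · have hy : 4*x - eB b < 0 := by linarith
        rw [ih _ (by rw [abs_of_neg hy]; linarith), abs_of_neg hy,
          abs_of_nonpos (by linarith : x ≤ 0)]
        linarith
    have : fF (b :: s) x = max |x| (fF s (4 * x - eB b) / 8 + 3/8) := by simp [fF]
    rw [this, max_eq_left key]

lemma fF_lt_one : ∀ (s : List Bool) (x : ℝ), |x| < 1 → fF s x < 1 := by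
  intro s; induction s with
  | nil => intro x hx; simpa [fF] using hx
  | cons b s ih =>
    intro x hx
    obtain ⟨e1, e2⟩ := eB_mem b
    have hx' := abs_lt.mp hx
    have habs : |4*x - eB b| < 5 := by
      rw [abs_lt]; constructor <;> linarith [hx'.1, hx'.2]
    have h5 : fF s (4*x - eB b) < 5 := by
      rcases lt_or_ge |4*x - eB b| 1 with h | h
      · exact lt_trans (ih _ h) (by norm_num)
      · rw [fF_eq_abs s _ h]; exact habs
    simp only [fF]
    exact max_lt hx (by linarith)

lemma fF_mono_app : ∀ (t r : List Bool) (x : ℝ), fF t x ≤ fF (t ++ r) x := by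
  intro t; induction t with
  | nil => intro r x; simpa [fF] using abs_le_fF r x
  | cons b t ih =>
    intro r x
    simp only [List.cons_append, List.append_eq, fF]
    exact max_le_max le_rfl (by have := ih r (4*x - eB b); linarith)

lemma fF_eq_outside : ∀ (t s : List Bool), t <+: s → ∀ x : ℝ,
    x ∉ Set.Ioo (loF t) (hiF t) → fF s x = fF t x := by
  intro t; induction t with
  | nil =>
    intro s _ x hx
    simp only [loF, hiF, Set.mem_Ioo, not_and_or, not_lt] at hx
    have h1 : 1 ≤ |x| := by
      rcases hx with h | h
      · rw [abs_of_nonpos (by linarith)]; linarith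
      · rw [abs_of_nonneg (by linarith)]; linarith
    rw [fF_eq_abs s x h1]; simp [fF]
  | cons b t ih =>
    intro s hp x hx
    obtain ⟨r, rfl⟩ := hp
    simp only [Set.mem_Ioo, not_and_or, not_lt, loF, hiF] at hx
    have hy : (4*x - eB b) ∉ Set.Ioo (loF t) (hiF t) := by
      simp only [Set.mem_Ioo, not_and_or, not_lt]
      rcases hx with h | h
      · left; linarith
      · right; linarith
    simp only [List.cons_append, List.append_eq, fF]
    rw [ih (t ++ r) ⟨r, rfl⟩ _ hy]

lemma fF_level : ∀ (t s : List Bool), t <+: s → ∀ x : ℝ,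
    (fF s x < bSeq t.length ↔ x ∈ Set.Ioo (loF t) (hiF t)) := by
  intro t; induction t with
  | nil =>
    intro s _ x
    simp only [List.length_nil, loF, hiF, Set.mem_Ioo]
    rw [show bSeq 0 = 1 from rfl]
    constructor
    · intro h
      exact abs_lt.mp (lt_of_le_of_lt (abs_le_fF s x) h)
    · intro h; exact fF_lt_one s x (abs_lt.mpr h)
  | cons b t ih =>
    intro s hp x
    obtain ⟨r, rfl⟩ := hp
    have hrec : bSeq t.length = 8 * bSeq (t.length + 1) - 3 := by
      rw [bSeq_rec8]; ring
    have hhi := (hiloF_b (b :: t)).1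
    have hlo := (hiloF_b (b :: t)).2
    simp only [loF, hiF, List.length_cons] at hhi hlo
    simp only [List.cons_append, List.append_eq, fF, Set.mem_Ioo, loF, hiF, List.length_cons]
    constructor
    · intro h
      have h1 := (max_lt_iff.mp h).2
      have h2 : fF (t ++ r) (4*x - eB b) < bSeq t.length := by rw [hrec]; linarith
      have h3 := Set.mem_Ioo.mp ((ih (t ++ r) ⟨r, rfl⟩ (4*x - eB b)).mp h2)
      constructor <;> linarith [h3.1, h3.2]
    · rintro ⟨ha, hb2⟩
      have h3 : (4*x - eB b) ∈ Set.Ioo (loF t) (hiF t) :=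
        Set.mem_Ioo.mpr ⟨by linarith, by linarith⟩
      have h2 := (ih (t ++ r) ⟨r, rfl⟩ _).mpr h3
      apply max_lt
      · rw [abs_lt]; constructor <;> linarith
      · rw [hrec] at h2; linarith

lemma fF_shape : ∀ (s : List Bool) (x : ℝ), x ∈ Set.Icc (loF s) (hiF s) →
    fF s x = bSeq s.length - (2:ℝ)⁻¹ ^ (3 * s.length)
      + (2:ℝ)⁻¹ ^ s.length * |x - (loF s + hiF s) / 2| := by
  intro s; induction s with
  | nil =>
    intro x _
    simp [fF, loF, hiF, bSeq]
  | cons b s ih =>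
    intro x hx
    obtain ⟨hx1, hx2⟩ := hx
    obtain ⟨e1, e2⟩ := eB_mem b
    obtain ⟨hb1, hb2, _⟩ := boundsF s
    simp only [loF, hiF] at hx1 hx2
    have hxh : |x| ≤ 1/2 := by rw [abs_le]; constructor <;> linarith
    have hy : (4*x - eB b) ∈ Set.Icc (loF s) (hiF s) :=
      ⟨by linarith, by linarith⟩
    have hmax : |x| ≤ fF s (4*x - eB b) / 8 + 3/8 := by
      have h1 := abs_le_fF s (4*x - eB b)
      have h2 : 4*|x| - 1 ≤ |4*x - eB b| := by
        have h3 := abs_sub_abs_le_abs_sub (4*x) (eB b)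
        have h4 : |(4:ℝ)*x| = 4 * |x| := by
          rw [abs_mul]; norm_num
        have h5 : |eB b| ≤ 1 := by cases b <;> norm_num [eB]
        linarith
      linarith
    simp only [fF, List.length_cons, loF, hiF]
    rw [max_eq_right hmax, ih _ hy]
    rw [show (4*x - eB b) - (loF s + hiF s) / 2
        = 4 * (x - ((loF s + eB b) / 4 + (hiF s + eB b) / 4) / 2) by ring]
    rw [abs_mul, show |(4:ℝ)| = 4 by norm_num]
    rw [bSeq_rec8]
    have p1 : (2:ℝ)⁻¹ ^ (3 * (s.length + 1)) = (2:ℝ)⁻¹ ^ (3 * s.length) * (1/8) := by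
      rw [show 3 * (s.length + 1) = 3 * s.length + 3 by ring, pow_add]; norm_num
    have p2 : (2:ℝ)⁻¹ ^ (s.length + 1) = (2:ℝ)⁻¹ ^ s.length * (1/2) := by
      rw [pow_succ]; norm_num
    rw [p1, p2]
    ring

lemma convexOn_affine_comp {g : ℝ → ℝ} (hg : ConvexOn ℝ Set.univ g) (a c : ℝ) :
    ConvexOn ℝ Set.univ (fun x => g (a * x + c)) := by
  refine ⟨convex_univ, fun x _ y _ p q hp hq hpq => ?_⟩
  have h := hg.2 (Set.mem_univ (a*x+c)) (Set.mem_univ (a*y+c)) hp hq hpq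
  simp only [smul_eq_mul] at h ⊢
  have hxy : a * (p * x + q * y) + c = p * (a*x+c) + q * (a*y+c) := by
    linear_combination (-(c:ℝ)) * hpq
  rw [hxy]; exact h

lemma convexOn_univ_abs' : ConvexOn ℝ Set.univ (fun x : ℝ => |x|) := by
  exact (convexOn_univ_norm (E := ℝ))

lemma fF_convex : ∀ s : List Bool, ConvexOn ℝ Set.univ (fF s) := by
  intro s; induction s with
  | nil =>
    have hfe : fF [] = fun x : ℝ => |x| := by funext x; simp [fF]
    rw [hfe]; exact convexOn_univ_abs'
  | cons b s ih =>
    have hfe : fF (b :: s) = fun x => max |x| (fF s (4 * x - eB b) / 8 + 3/8) := by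
      funext x; simp [fF]
    rw [hfe]
    have h2 : ConvexOn ℝ Set.univ (fun x => fF s (4 * x + (-(eB b)))) :=
      convexOn_affine_comp ih 4 (-(eB b))
    have h2' : ConvexOn ℝ Set.univ (fun x => fF s (4 * x - eB b)) := by
      simpa [sub_eq_add_neg] using h2
    have h3 : ConvexOn ℝ Set.univ (fun x => fF s (4 * x - eB b) / 8 + 3/8) := by
      have h4 := (h2'.smul (by norm_num : (0:ℝ) ≤ 1/8)).add_const (3/8 : ℝ)
      have h5 : ((fun x => (1/8 : ℝ) • fF s (4*x - eB b)) + fun _ => (3/8 : ℝ))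
          = fun x => fF s (4*x - eB b) / 8 + 3/8 := by
        funext x; simp only [Pi.add_apply, smul_eq_mul]; ring
      rwa [h5] at h4
    have := convexOn_univ_abs'.sup h3
    simpa [Pi.sup_def] using this

lemma fF_lip : ∀ s : List Bool, LipschitzWith 1 (fF s) := by
  intro s; induction s with
  | nil =>
    have hfe : fF [] = fun x : ℝ => |x| := by funext x; simp [fF]
    rw [hfe]
    exact (lipschitzWith_one_norm (E := ℝ))
  | cons b s ih =>
    have hfe : fF (b :: s) = fun x => max |x| (fF s (4 * x - eB b) / 8 + 3/8) := by
      funext x; simp [fF]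
    rw [hfe]
    have habs : LipschitzWith 1 (fun x : ℝ => |x|) := by
      exact (lipschitzWith_one_norm (E := ℝ))
    have hinner : LipschitzWith 4 (fun x : ℝ => 4 * x - eB b) := by
      apply LipschitzWith.of_dist_le_mul
      intro x y
      rw [Real.dist_eq, Real.dist_eq,
        show (4*x - eB b) - (4*y - eB b) = 4*(x-y) by ring, abs_mul,
        show |(4:ℝ)| = 4 by norm_num]
      push_cast
      norm_num
    have houter : LipschitzWith 8⁻¹ (fun t : ℝ => t/8 + 3/8) := by
      apply LipschitzWith.of_dist_le_mul
      intro x y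
      rw [Real.dist_eq, Real.dist_eq,
        show (x/8 + 3/8) - (y/8 + 3/8) = (x - y)/8 by ring, abs_div,
        show |(8:ℝ)| = 8 by norm_num]
      push_cast
      rw [div_eq_inv_mul]
    have hcomp : LipschitzWith (8⁻¹ * (1 * 4))
        (fun x : ℝ => fF s (4 * x - eB b) / 8 + 3/8) :=
      houter.comp (ih.comp hinner)
    have h2 : LipschitzWith 1 (fun x : ℝ => fF s (4 * x - eB b) / 8 + 3/8) := by
      apply hcomp.weaken
      rw [← NNReal.coe_le_coe]
      push_cast
      norm_num
    apply (habs.max h2).weaken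
    simp

lemma fF_nested : ∀ (s t : List Bool), t <+: s →
    Set.Icc (loF s) (hiF s) ⊆ Set.Icc (loF t) (hiF t) := by
  intro s t; induction t generalizing s with
  | nil =>
    intro _ x hx
    obtain ⟨b1, b2, _⟩ := boundsF s
    rw [Set.mem_Icc] at hx ⊢
    simp only [loF, hiF]
    exact ⟨by linarith [hx.1], by linarith [hx.2]⟩
  | cons b t ih =>
    intro hp x hx
    obtain ⟨r, rfl⟩ := hp
    simp only [List.cons_append, List.append_eq, Set.mem_Icc, loF, hiF] at hx ⊢
    have hy : (4*x - eB b) ∈ Set.Icc (loF (t++r)) (hiF (t++r)) :=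
      Set.mem_Icc.mpr ⟨by linarith [hx.1], by linarith [hx.2]⟩
    have h2 := Set.mem_Icc.mp (ih (t ++ r) ⟨r, rfl⟩ hy)
    exact ⟨by linarith [h2.1], by linarith [h2.2]⟩

lemma fF_disjoint : ∀ (s t : List Bool), ¬ s <+: t → ¬ t <+: s →
    Set.Ioo (loF s) (hiF s) ∩ Set.Ioo (loF t) (hiF t) = ∅ := by
  intro s
  induction s with
  | nil => intro t h _; exact absurd t.nil_prefix h
  | cons a s ih =>
    intro t hst hts
    cases t with
    | nil => exact absurd List.nil_prefix hts
    | cons c t' =>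
      by_cases hac : a = c
      · subst hac
        have h1 : ¬ s <+: t' := fun h => hst (List.cons_prefix_cons.mpr ⟨rfl, h⟩)
        have h2 : ¬ t' <+: s := fun h => hts (List.cons_prefix_cons.mpr ⟨rfl, h⟩)
        have hd := ih t' h1 h2
        apply Set.eq_empty_iff_forall_notMem.mpr
        intro x hx
        simp only [Set.mem_inter_iff, Set.mem_Ioo, loF, hiF] at hx
        obtain ⟨⟨h1a, h1b⟩, ⟨h2a, h2b⟩⟩ := hx
        have hmem : (4*x - eB a) ∈ Set.Ioo (loF s) (hiF s) ∩ Set.Ioo (loF t') (hiF t') :=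
          ⟨Set.mem_Ioo.mpr ⟨by linarith, by linarith⟩,
           Set.mem_Ioo.mpr ⟨by linarith, by linarith⟩⟩
        rw [hd] at hmem
        exact hmem
      · apply Set.eq_empty_iff_forall_notMem.mpr
        intro x hx
        simp only [Set.mem_inter_iff, Set.mem_Ioo, loF, hiF] at hx
        obtain ⟨⟨h1a, h1b⟩, ⟨h2a, h2b⟩⟩ := hx
        obtain ⟨bs1, bs2, _⟩ := boundsF s
        obtain ⟨bt1, bt2, _⟩ := boundsF t'
        cases a <;> cases c
        · exact hac rfl
        · norm_num [eB] at h1b h2a; linarith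
        · norm_num [eB] at h1a h2b; linarith
        · exact hac rfl

/-- For every natural number `M` there exists a Nemirovski family
of depth `M`. -/
theorem exists_nemirovskiFamily : ∀ M : ℕ, Nonempty (NemirovskiFamily M) := by
  intro M
  refine ⟨⟨fF, loF, hiF, ?_, ?_, ?_, ?_, ?_, ?_, ?_, ?_, ?_, ?_, ?_, ?_⟩⟩
  · intro x _; simp [fF]
  · simp [loF]
  · simp [hiF]
  · intro s _
    exact (fF_convex s).subset (Set.subset_univ _) (convex_Icc _ _)
  · intro s _
    exact (fF_lip s).lipschitzOnWith
  · intro s _; exact lengthF s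
  · intro s t _ _ hst hts; exact fF_disjoint s t hst hts
  · intro s t _ hts; exact fF_nested s t hts
  · intro s t _ hts x _
    obtain ⟨r, rfl⟩ := hts
    exact fF_mono_app t r x
  · intro s t _ hts x _ hx; exact fF_eq_outside t s hts x hx
  · intro s _ x hx; exact fF_shape s x hx
  · intro s t _ hts x _; exact fF_level t s hts x
end

section
/- Let (f_s, I_s, b_l) be a Nemirovski family of depth M and let 0 < ε ≤ 2^{−3M}. Then for every binary string s of length M, every ε-minimum of f_s on [−1,1] lies in the interior of I_s; consequently, for any two distinct binary strings s, t of length M, the sets of ε-minima of f_s and f_t are disjoint. -/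
/-- for a Nemirovski family of depth `M` and `0 < ε ≤ 2^{-3M}`,
every ε-minimum of `f s` (with `|s| = M`) lies in the interior of `I s`, and
the sets of ε-minima of distinct length-`M` members are disjoint. -/
theorem nemirovski_packing (M : ℕ) (F : NemirovskiFamily M) (ε : ℝ)
    (hε : 0 < ε) (hε' : ε ≤ (2:ℝ)⁻¹ ^ (3 * M)) :
    (∀ s : List Bool, s.length = M →
      epsMinima (Set.Icc (-1:ℝ) 1) (F.f s) ε ⊆ Set.Ioo (F.lo s) (F.hi s)) ∧
    (∀ s t : List Bool, s.length = M → t.length = M → s ≠ t →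
      epsMinima (Set.Icc (-1:ℝ) 1) (F.f s) ε ∩
        epsMinima (Set.Icc (-1:ℝ) 1) (F.f t) ε = ∅) := by
  have key : ∀ s : List Bool, s.length = M →
      epsMinima (Set.Icc (-1:ℝ) 1) (F.f s) ε ⊆ Set.Ioo (F.lo s) (F.hi s) := by
    intro s hs x hx
    have hsM : s.length ≤ M := hs.le
    have hsub : Set.Icc (F.lo s) (F.hi s) ⊆ Set.Icc (-1:ℝ) 1 := by
      have h := F.nested s [] hsM (List.nil_prefix)
      rwa [F.lo_nil, F.hi_nil] at h
    have hlen := F.length_eq s hsM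
    have hpow : (0:ℝ) < (4:ℝ)⁻¹ ^ s.length := by positivity
    have hlohi : F.lo s < F.hi s := by nlinarith
    have hcIoo : (F.lo s + F.hi s) / 2 ∈ Set.Ioo (F.lo s) (F.hi s) :=
      ⟨by linarith, by linarith⟩
    have hcIcc : (F.lo s + F.hi s) / 2 ∈ Set.Icc (F.lo s) (F.hi s) :=
      Set.Ioo_subset_Icc_self hcIoo
    have hc1 : (F.lo s + F.hi s) / 2 ∈ Set.Icc (-1:ℝ) 1 := hsub hcIcc
    have hfc : F.f s ((F.lo s + F.hi s) / 2) = bSeq s.length - (2:ℝ)⁻¹ ^ (3 * s.length) := by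
      rw [F.shape s hsM _ hcIcc, sub_self, abs_zero, mul_zero, add_zero]
    have hlb : ∀ y ∈ Set.Icc (-1:ℝ) 1,
        bSeq s.length - (2:ℝ)⁻¹ ^ (3 * s.length) ≤ F.f s y := by
      intro y hy
      by_cases hmem : y ∈ Set.Ioo (F.lo s) (F.hi s)
      · have hsh := F.shape s hsM y (Set.Ioo_subset_Icc_self hmem)
        have habs : 0 ≤ (2:ℝ)⁻¹ ^ s.length * |y - (F.lo s + F.hi s) / 2| :=
          mul_nonneg (by positivity) (abs_nonneg _)
        linarith
      · have hlev := F.level s s hsM (List.prefix_refl s) y hy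
        have h1 : ¬ F.f s y < bSeq s.length := fun h => hmem (hlev.mp h)
        have h2 : (0:ℝ) ≤ (2:ℝ)⁻¹ ^ (3 * s.length) := by positivity
        linarith [not_lt.mp h1]
    have hbdd : BddBelow (F.f s '' Set.Icc (-1:ℝ) 1) := by
      refine ⟨bSeq s.length - (2:ℝ)⁻¹ ^ (3 * s.length), ?_⟩
      rintro v ⟨y, hy, rfl⟩
      exact hlb y hy
    have h1 : sInf (F.f s '' Set.Icc (-1:ℝ) 1) ≤ bSeq s.length - (2:ℝ)⁻¹ ^ (3 * s.length) := by
      rw [← hfc]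
      exact csInf_le hbdd ⟨_, hc1, rfl⟩
    obtain ⟨hx1, hx2⟩ := hx
    have hflt : F.f s x < bSeq s.length := by
      rw [hs] at h1 ⊢
      linarith
    exact (F.level s s hsM (List.prefix_refl s) x hx1).mp hflt
  refine ⟨key, fun s t hs ht hne => ?_⟩
  have hd := F.interior_disjoint s t hs.le ht.le
    (fun h => hne (h.eq_of_length (hs.trans ht.symm)))
    (fun h => hne ((h.eq_of_length (ht.trans hs.symm)).symm))
  apply Set.eq_empty_of_subset_empty
  rw [← hd]
  exact Set.inter_subset_inter (key s hs) (key t ht)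
end

section
/- Let (f_s, I_s, b_l) be a Nemirovski family of depth M. Then for every binary string s of length M, the minimum of f_s over [−1,1] equals b_M − 2^{−3M} and is attained at exactly one point, namely the midpoint of I_s. In particular, all the functions f_s with |s| = M have the same minimum value. -/
/-- for a Nemirovski family of depth `M`, the minimum of `f s`
(with `|s| = M`) over `[-1,1]` equals `b_M - 2^{-3M}`, and is attained exactly
at the midpoint of `I s`.  In particular all the `f s` with `|s| = M` have the
same minimum value. -/
theorem nemirovski_min_value (M : ℕ) (F : NemirovskiFamily M) :
    ∀ s : List Bool, s.length = M →
      IsLeast (F.f s '' Set.Icc (-1:ℝ) 1) (bSeq M - (2:ℝ)⁻¹ ^ (3 * M)) ∧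
      F.f s ((F.lo s + F.hi s) / 2) = bSeq M - (2:ℝ)⁻¹ ^ (3 * M) ∧
      (∀ x ∈ Set.Icc (-1:ℝ) 1,
        F.f s x = bSeq M - (2:ℝ)⁻¹ ^ (3 * M) → x = (F.lo s + F.hi s) / 2) := by
  intro s hs
  have hle : s.length ≤ M := le_of_eq hs
  have hlen := F.length_eq s hle
  have hpow : (0:ℝ) < 2 * (4:ℝ)⁻¹ ^ s.length := by positivity
  have hlo_lt_hi : F.lo s < F.hi s := by linarith
  have hsub : Set.Icc (F.lo s) (F.hi s) ⊆ Set.Icc (-1:ℝ) 1 := by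
    have h := F.nested s [] hle List.nil_prefix
    rwa [F.lo_nil, F.hi_nil] at h
  have hcmem : (F.lo s + F.hi s) / 2 ∈ Set.Icc (F.lo s) (F.hi s) :=
    ⟨by linarith, by linarith⟩
  have hc1 : (F.lo s + F.hi s) / 2 ∈ Set.Icc (-1:ℝ) 1 := hsub hcmem
  have hfc : F.f s ((F.lo s + F.hi s) / 2) = bSeq M - (2:ℝ)⁻¹ ^ (3 * M) := by
    have h := F.shape s hle _ hcmem
    rw [hs] at h
    simpa using h
  have h2pos : (0:ℝ) < (2:ℝ)⁻¹ ^ (3 * M) := by positivity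
  have h2Mpos : (0:ℝ) < (2:ℝ)⁻¹ ^ M := by positivity
  have hlow : ∀ x ∈ Set.Icc (-1:ℝ) 1, bSeq M - (2:ℝ)⁻¹ ^ (3 * M) ≤ F.f s x := by
    intro x hx
    by_cases hxI : x ∈ Set.Icc (F.lo s) (F.hi s)
    · have h := F.shape s hle x hxI
      rw [hs] at h
      have : (0:ℝ) ≤ (2:ℝ)⁻¹ ^ M * |x - (F.lo s + F.hi s) / 2| := by positivity
      linarith
    · have hxO : x ∉ Set.Ioo (F.lo s) (F.hi s) := fun h => hxI (Set.Ioo_subset_Icc_self h)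
      have h := F.level s s hle (List.prefix_refl s) x hx
      rw [hs] at h
      have : ¬ F.f s x < bSeq M := fun hlt => hxO (h.mp hlt)
      linarith [not_lt.mp this]
  refine ⟨⟨⟨_, hc1, hfc⟩, ?_⟩, hfc, ?_⟩
  · rintro y ⟨x, hx, rfl⟩; exact hlow x hx
  · intro x hx hfx
    by_cases hxI : x ∈ Set.Icc (F.lo s) (F.hi s)
    · have h := F.shape s hle x hxI
      rw [hs, hfx] at h
      have habs : (2:ℝ)⁻¹ ^ M * |x - (F.lo s + F.hi s) / 2| = 0 := by linarith
      have : |x - (F.lo s + F.hi s) / 2| = 0 := by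
        rcases mul_eq_zero.mp habs with h' | h'
        · exact absurd h' (ne_of_gt h2Mpos)
        · exact h'
      have := abs_eq_zero.mp this
      linarith
    · exfalso
      have hxO : x ∉ Set.Ioo (F.lo s) (F.hi s) := fun h => hxI (Set.Ioo_subset_Icc_self h)
      have h := F.level s s hle (List.prefix_refl s) x hx
      rw [hs] at h
      have hnl : ¬ F.f s x < bSeq M := fun hlt => hxO (h.mp hlt)
      rw [hfx] at hnl
      exact hnl (by linarith)
end

section
/- Let (f_s, I_s, b_l) be a Nemirovski family of depth M ≥ 1. Then for every x ∈ [−1,1] there exists a nonempty binary string s of length l ≤ M with the following properties: (i) f_{flipCut_i(s)}(x) ≥ b_i for every 1 ≤ i ≤ l; (ii) f_{flipCut_{i+1}(s)}(x) < b_i for every 1 ≤ i ≤ l−1; (iii) f_{flipCut_l(s)}(x) ≥ f_s(x); (iv) if l < M then f_s(x) ≥ b_l; and (v) every binary string t of length M has exactly one prefix p belonging to the set {flipCut_1(s), …, flipCut_l(s), s}, and for this prefix f_t(x) = f_p(x). -/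
/-- `flipCut s i` (for `1 ≤ i ≤ |s|`): the first `i` bits of `s`, with the
`i`-th bit flipped. -/
def flipCut (s : List Bool) (i : ℕ) : List Bool :=
  s.take (i - 1) ++ [!(s.getD (i - 1) false)]

lemma flipCut_length (s : List Bool) {i : ℕ} (h1 : 1 ≤ i) (h2 : i ≤ s.length) :
    (flipCut s i).length = i := by
  simp [flipCut]; omega

lemma flipCut_getElem_last (s : List Bool) {i : ℕ} (h1 : 1 ≤ i) (h2 : i ≤ s.length) :
    (flipCut s i)[i-1]'(by rw [flipCut_length s h1 h2]; omega) = !(s[i-1]'(by omega)) := by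
  unfold flipCut
  rw [List.getElem_append_right (by simp)]
  simp [List.getD, List.getElem?_eq_getElem (show i-1 < s.length by omega)]

lemma flipCut_getElem_lt (s : List Bool) {i k : ℕ} (hk : k < i - 1) (h2 : i ≤ s.length) :
    (flipCut s i)[k]'(by simp [flipCut]; omega) = s[k]'(by omega) := by
  unfold flipCut
  rw [List.getElem_append_left (by simp; omega)]
  exact List.getElem_take

lemma take_not_prefix_flipCut (s : List Bool) {i : ℕ} (h1 : 1 ≤ i) (h2 : i ≤ s.length) :
    ¬ s.take i <+: flipCut s i ∧ ¬ flipCut s i <+: s.take i := by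
  have hlt : i - 1 < s.length := by omega
  have hne : s.take i ≠ flipCut s i := by
    intro h
    have h3 : (s.take i)[i-1]'(by simp; omega) = (flipCut s i)[i-1]'(by
        rw [flipCut_length s h1 h2]; omega) := by
      congr 1
    rw [List.getElem_take, flipCut_getElem_last s h1 h2] at h3
    simp at h3
  have hl1 : (s.take i).length = i := by simp; omega
  have hl2 : (flipCut s i).length = i := flipCut_length s h1 h2
  exact ⟨fun h => hne (h.eq_of_length (by omega)),
         fun h => hne (h.eq_of_length (by omega)).symm⟩

/-- The "query set" membership predicate. -/
def inQSet (s p : List Bool) : Prop :=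
  p = s ∨ ∃ i : ℕ, 1 ≤ i ∧ i ≤ s.length ∧ p = flipCut s i

lemma qset_prefix_eq {s p q : List Bool}
    (hp : inQSet s p) (hq : inQSet s q) (hpq : p <+: q) : p = q := by
  rcases hp with rfl | ⟨i, hi1, hi2, rfl⟩
  · rcases hq with rfl | ⟨j, hj1, hj2, rfl⟩
    · rfl
    · have _hl := hpq.length_le
      rw [flipCut_length p hj1 hj2] at _hl
      exact hpq.eq_of_length (by rw [flipCut_length p hj1 hj2]; omega)
  · rcases hq with rfl | ⟨j, hj1, hj2, rfl⟩
    · exfalso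
      have h3 := hpq.getElem (i := i-1) (by rw [flipCut_length q hi1 hi2]; omega)
      rw [flipCut_getElem_last q hi1 hi2] at h3
      simp at h3
    · have hlen := hpq.length_le
      rw [flipCut_length s hi1 hi2, flipCut_length s hj1 hj2] at hlen
      rcases eq_or_lt_of_le hlen with rfl | hij
      · rfl
      · exfalso
        have h3 := hpq.getElem (i := i-1) (by rw [flipCut_length s hi1 hi2]; omega)
        rw [flipCut_getElem_last s hi1 hi2,
            flipCut_getElem_lt s (by omega) hj2] at h3
        simp at h3

lemma prefix_of_getElem? {s t : List Bool} (hl : s.length ≤ t.length)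
    (h : ∀ n, n < s.length → s[n]? = t[n]?) : s <+: t := by
  have hst : s = t.take s.length := by
    apply List.ext_getElem?
    intro n
    by_cases hn : n < s.length
    · rw [h n hn]
      simp [List.getElem?_take, hn]
    · push_neg at hn
      rw [List.getElem?_eq_none (by simpa using hn),
          List.getElem?_eq_none (by simp; omega)]
  rw [hst]
  exact List.take_prefix _ _

lemma flipCut_append (u : List Bool) (c : Bool) :
    flipCut (u ++ [c]) (u.length + 1) = u ++ [!c] := by
  unfold flipCut
  simp [List.take_left' rfl, List.getD]

lemma nem_aux {M : ℕ} (hM : 1 ≤ M) (F : NemirovskiFamily M) (x : ℝ) (k : ℕ) :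
    ∀ u : List Bool, u.length + k = M →
    (∀ i, 1 ≤ i → i ≤ u.length → x ∈ Set.Ioo (F.lo (u.take i)) (F.hi (u.take i))) →
    ∃ s : List Bool, 1 ≤ s.length ∧ s.length ≤ M ∧
      (∀ i, 1 ≤ i → i < s.length → x ∈ Set.Ioo (F.lo (s.take i)) (F.hi (s.take i))) ∧
      ((s.length = M ∧ x ∈ Set.Ioo (F.lo s) (F.hi s)) ∨
       (x ∉ Set.Ioo (F.lo s) (F.hi s) ∧
        x ∉ Set.Ioo (F.lo (flipCut s s.length)) (F.hi (flipCut s s.length)) ∧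
        F.f s x ≤ F.f (flipCut s s.length) x)) := by
  induction k with
  | zero =>
    intro u hu inv
    refine ⟨u, by omega, by omega, fun i h1 h2 => inv i h1 (by omega),
      Or.inl ⟨by omega, ?_⟩⟩
    simpa using inv u.length (by omega) le_rfl
  | succ k ih =>
    intro u hu inv
    have ext_inv : ∀ c : Bool, x ∈ Set.Ioo (F.lo (u++[c])) (F.hi (u++[c])) →
        ∀ i, 1 ≤ i → i ≤ (u++[c]).length →
        x ∈ Set.Ioo (F.lo ((u++[c]).take i)) (F.hi ((u++[c]).take i)) := by
      intro c hc i h1 h2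
      simp at h2
      rcases lt_or_eq_of_le h2 with h | h
      · rw [List.take_append_of_le_length (by omega)]
        exact inv i h1 (by omega)
      · rw [h, List.take_of_length_le (by simp)]
        exact hc
    by_cases h0 : x ∈ Set.Ioo (F.lo (u++[false])) (F.hi (u++[false]))
    · exact ih (u++[false]) (by simp; omega) (ext_inv false h0)
    · by_cases h1 : x ∈ Set.Ioo (F.lo (u++[true])) (F.hi (u++[true]))
      · exact ih (u++[true]) (by simp; omega) (ext_inv true h1)
      · have hA : ∀ c : Bool, ∀ i, 1 ≤ i → i < (u++[c]).length →
            x ∈ Set.Ioo (F.lo ((u++[c]).take i)) (F.hi ((u++[c]).take i)) := by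
          intro c i hi1 hi2
          simp at hi2
          rw [List.take_append_of_le_length (by omega)]
          exact inv i hi1 (by omega)
        have hlen : ∀ c : Bool, (u++[c]).length = u.length + 1 := by simp
        rcases le_or_gt (F.f (u++[false]) x) (F.f (u++[true]) x) with hcmp | hcmp
        · refine ⟨u ++ [false], by simp, by simp; omega, hA false, Or.inr ?_⟩
          rw [hlen false, flipCut_append u false]
          exact ⟨h0, by simpa using h1, by simpa using hcmp⟩
        · refine ⟨u ++ [true], by simp, by simp; omega, hA true, Or.inr ?_⟩
          rw [hlen true, flipCut_append u true]
          exact ⟨h1, by simpa using h0, by simpa using hcmp.le⟩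

/-- for every `x ∈ [-1,1]` there is a nonempty string `s` of
length `l ≤ M` such that (i) `f_{flipCut_i s}(x) ≥ b_i` for `1 ≤ i ≤ l`;
(ii) `f_{flipCut_{i+1} s}(x) < b_i` for `1 ≤ i ≤ l-1`;
(iii) `f_{flipCut_l s}(x) ≥ f_s(x)`; (iv) if `l < M` then `f_s(x) ≥ b_l`; and
(v) every length-`M` string `t` has exactly one prefix `p` in
`{flipCut_1 s, …, flipCut_l s, s}`, and `f_t(x) = f_p(x)` for it. -/
theorem nemirovski_query_string (M : ℕ) (hM : 1 ≤ M) (F : NemirovskiFamily M) :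
    ∀ x ∈ Set.Icc (-1:ℝ) 1, ∃ s : List Bool, s ≠ [] ∧ s.length ≤ M ∧
      (∀ i : ℕ, 1 ≤ i → i ≤ s.length → bSeq i ≤ F.f (flipCut s i) x) ∧
      (∀ i : ℕ, 1 ≤ i → i ≤ s.length - 1 → F.f (flipCut s (i + 1)) x < bSeq i) ∧
      F.f s x ≤ F.f (flipCut s s.length) x ∧
      (s.length < M → bSeq s.length ≤ F.f s x) ∧
      (∀ t : List Bool, t.length = M →
        (∃! p : List Bool,
          (p = s ∨ ∃ i : ℕ, 1 ≤ i ∧ i ≤ s.length ∧ p = flipCut s i) ∧ p <+: t) ∧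
        (∀ p : List Bool,
          (p = s ∨ ∃ i : ℕ, 1 ≤ i ∧ i ≤ s.length ∧ p = flipCut s i) → p <+: t →
            F.f t x = F.f p x)) := by
  intro x hx
  obtain ⟨s, hs1, hsM, hA, hB⟩ := nem_aux hM F x M [] (by simp) (by intro i h1 h2; simp at h2; exact absurd h2 (by omega))
  have hsne : s ≠ [] := by
    intro h; rw [h] at hs1; simp at hs1
  -- x is never in the interior of a flipped interval
  have hQ : ∀ i, 1 ≤ i → i ≤ s.length →
      x ∉ Set.Ioo (F.lo (flipCut s i)) (F.hi (flipCut s i)) := by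
    intro i h1 h2 hmem
    rcases lt_or_eq_of_le h2 with h | h
    · have hxi := hA i h1 h
      have hnp := take_not_prefix_flipCut s h1 h2
      have hd := F.interior_disjoint (s.take i) (flipCut s i) (by simp; omega)
        (by rw [flipCut_length s h1 h2]; omega) hnp.1 hnp.2
      have : x ∈ (∅ : Set ℝ) := hd ▸ Set.mem_inter hxi hmem
      simp at this
    · subst h
      rcases hB with ⟨hMl, hxs⟩ | ⟨_, hflip, _⟩
      · have hnp := take_not_prefix_flipCut s h1 le_rfl
        rw [List.take_length] at hnp
        have hd := F.interior_disjoint s (flipCut s s.length) hsM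
          (by rw [flipCut_length s h1 le_rfl]; exact hsM) hnp.1 hnp.2
        have : x ∈ (∅ : Set ℝ) := hd ▸ Set.mem_inter hxs hmem
        simp at this
      · exact hflip hmem
  -- (i)
  have hI : ∀ i, 1 ≤ i → i ≤ s.length → bSeq i ≤ F.f (flipCut s i) x := by
    intro i h1 h2
    have hlev := F.level (flipCut s i) (flipCut s i)
      (by rw [flipCut_length s h1 h2]; omega) (List.prefix_refl _) x hx
    rw [flipCut_length s h1 h2] at hlev
    exact le_of_not_gt fun h => hQ i h1 h2 (hlev.mp h)
  refine ⟨s, hsne, hsM, hI, ?_, ?_, ?_, ?_⟩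
  -- (ii)
  · intro i h1 h2
    have hi1 : i + 1 ≤ s.length := by omega
    have hpre : s.take i <+: flipCut s (i+1) := by
      unfold flipCut
      simp only [Nat.add_sub_cancel]
      exact List.prefix_append _ _
    have hlev := F.level (flipCut s (i+1)) (s.take i)
      (by rw [flipCut_length s (by omega) hi1]; omega) hpre x hx
    have hlent : (s.take i).length = i := by simp; omega
    rw [hlent] at hlev
    exact hlev.mpr (hA i h1 (by omega))
  -- (iii)
  · rcases hB with ⟨hMl, hxs⟩ | ⟨_, _, hle⟩
    · have hlev := F.level s s hsM (List.prefix_refl s) x hx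
      exact (hlev.mpr hxs).le.trans (hI s.length hs1 le_rfl)
    · exact hle
  -- (iv)
  · intro hlt
    rcases hB with ⟨hMl, _⟩ | ⟨hxs, _, _⟩
    · omega
    · have hlev := F.level s s hsM (List.prefix_refl s) x hx
      exact le_of_not_gt fun h => hxs (hlev.mp h)
  -- (v)
  · intro t ht
    have hsl : s.length ≤ t.length := by omega
    have hexists : ∃ p : List Bool, inQSet s p ∧ p <+: t := by
      by_cases hst : s <+: t
      · exact ⟨s, Or.inl rfl, hst⟩
      · have hdiff : ∃ k : ℕ, s[k]? ≠ t[k]? := by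
          by_contra hc
          push_neg at hc
          exact hst (prefix_of_getElem? hsl fun n _ => hc n)
        have hk : Nat.find hdiff < s.length := by
          by_contra hge
          push_neg at hge
          exact hst (prefix_of_getElem? hsl fun n hn =>
            not_ne_iff.mp (Nat.find_min hdiff (lt_of_lt_of_le hn hge)))
        set k := Nat.find hdiff with hkdef
        have hkt : k < t.length := by omega
        have hagree : ∀ n, n < k → s[n]? = t[n]? := fun n hn =>
          not_ne_iff.mp (Nat.find_min hdiff hn)
        have hp : flipCut s (k+1) = t.take (k+1) := by
          apply List.ext_getElem
            (by rw [flipCut_length s (by omega) (by omega)]; simp; omega)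
          intro n hn1 hn2
          rw [flipCut_length s (by omega) (by omega)] at hn1
          rcases lt_or_eq_of_le (Nat.lt_succ_iff.mp hn1) with h | h
          · rw [List.getElem_take]
            have h5 := hagree n h
            rw [List.getElem?_eq_getElem (show n < s.length by omega),
                List.getElem?_eq_getElem (show n < t.length by omega)] at h5
            have h6 : s[n]'(by omega) = t[n]'(by omega) := Option.some_injective _ h5
            rw [← h6]
            exact flipCut_getElem_lt s (by omega) (by omega)
          · subst h
            have h5 := Nat.find_spec hdiff
            rw [← hkdef] at h5
            rw [List.getElem?_eq_getElem (show k < s.length by omega),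
                List.getElem?_eq_getElem (show k < t.length by omega)] at h5
            have h6 : s[k]'(by omega) ≠ t[k]'(by omega) := fun h => h5 (by rw [h])
            rw [List.getElem_take]
            have h7 := flipCut_getElem_last s (i := k+1) (by omega) (by omega)
            simp only [Nat.add_sub_cancel] at h7
            rw [h7]
            revert h6
            cases (s[k]'(by omega)) <;> cases (t[k]'(by omega)) <;> simp
        refine ⟨flipCut s (k+1), Or.inr ⟨k+1, by omega, by omega, rfl⟩, ?_⟩
        rw [hp]
        exact List.take_prefix _ _
    obtain ⟨p, hPp, hpt⟩ := hexists
    constructor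
    · refine ⟨p, ⟨hPp, hpt⟩, ?_⟩
      intro q ⟨hPq, hqt⟩
      rcases List.prefix_or_prefix_of_prefix hqt hpt with h | h
      · exact qset_prefix_eq hPq hPp h
      · exact (qset_prefix_eq hPp hPq h).symm
    · intro p' hp' hpt'
      rcases hp' with rfl | ⟨i, h1, h2, rfl⟩
      · rcases hB with ⟨hMl, _⟩ | ⟨hxs, _, _⟩
        · rw [hpt'.eq_of_length (by omega)]
        · exact F.eq_outside t p' (by omega) hpt' x hx hxs
      · exact F.eq_outside t (flipCut s i) (by omega) hpt' x hx (hQ i h1 h2)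
end

section
/- Let (f_s, I_s, b_l) be a Nemirovski family of depth M, let n ≥ 1 and 0 < ε ≤ 2^{−3M}. For an n-tuple σ = (s_1, …, s_n) of binary strings of length M define F_σ : [−1,1]^n → ℝ by F_σ(x) = max_{1≤i≤n} f_{s_i}(x_i). Then each F_σ is convex and Lipschitz with constant 1 with respect to the supremum norm, S_ε(F_σ) = ∏_{i=1}^n S_ε(f_{s_i}), and for any two distinct n-tuples σ ≠ τ of length-M strings the sets of ε-minima of F_σ and F_τ are disjoint. -/
namespace NemAux

variable {M : ℕ} (F : NemirovskiFamily M)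

lemma lo_lt_hi {s : List Bool} (hs : s.length ≤ M) : F.lo s < F.hi s := by
  have h := F.length_eq s hs
  have : (0:ℝ) < (4:ℝ)⁻¹ ^ s.length := by positivity
  linarith

lemma Icc_subset {s : List Bool} (hs : s.length ≤ M) :
    Set.Icc (F.lo s) (F.hi s) ⊆ Set.Icc (-1:ℝ) 1 := by
  have h := F.nested s [] hs List.nil_prefix
  rwa [F.lo_nil, F.hi_nil] at h

lemma center_mem {s : List Bool} (hs : s.length ≤ M) :
    (F.lo s + F.hi s) / 2 ∈ Set.Icc (F.lo s) (F.hi s) := by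
  have := lo_lt_hi F hs
  simp only [Set.mem_Icc]
  constructor <;> linarith

/-- The global lower bound / infimum value of `f s`. -/
noncomputable def mVal (s : List Bool) : ℝ := bSeq s.length - (2:ℝ)⁻¹ ^ (3 * s.length)

lemma mVal_lt_b (s : List Bool) : mVal s < bSeq s.length := by
  have : (0:ℝ) < (2:ℝ)⁻¹ ^ (3 * s.length) := by positivity
  simp only [mVal]; linarith

lemma f_center {s : List Bool} (hs : s.length ≤ M) :
    F.f s ((F.lo s + F.hi s) / 2) = mVal s := by
  have h := F.shape s hs _ (center_mem F hs)
  simp [h, mVal]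

lemma lower_bound {s : List Bool} (hs : s.length ≤ M) {x : ℝ}
    (hx : x ∈ Set.Icc (-1:ℝ) 1) : mVal s ≤ F.f s x := by
  by_cases hx' : x ∈ Set.Ioo (F.lo s) (F.hi s)
  · have h := F.shape s hs x (Set.Ioo_subset_Icc_self hx')
    have : (0:ℝ) ≤ (2:ℝ)⁻¹ ^ s.length * |x - (F.lo s + F.hi s) / 2| := by positivity
    simp only [mVal]; linarith
  · have h := F.level s s hs List.prefix_rfl x hx
    have : ¬ (F.f s x < bSeq s.length) := fun hlt => hx' (h.mp hlt)
    have := mVal_lt_b s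
    linarith [not_lt.mp ‹¬ (F.f s x < bSeq s.length)›]

lemma inf_eq {s : List Bool} (hs : s.length ≤ M) :
    sInf (F.f s '' Set.Icc (-1:ℝ) 1) = mVal s := by
  apply le_antisymm
  · apply csInf_le
    · exact ⟨mVal s, by rintro _ ⟨x, hx, rfl⟩; exact lower_bound F hs hx⟩
    · exact ⟨_, Icc_subset F hs (center_mem F hs), f_center F hs⟩
  · apply le_csInf
    · exact ⟨_, _, Icc_subset F hs (center_mem F hs), rfl⟩
    · rintro _ ⟨x, hx, rfl⟩; exact lower_bound F hs hx

lemma mem_epsMinima_iff {s : List Bool} (hs : s.length ≤ M) (ε : ℝ) (x : ℝ) :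
    x ∈ epsMinima (Set.Icc (-1:ℝ) 1) (F.f s) ε ↔
      x ∈ Set.Icc (-1:ℝ) 1 ∧ F.f s x < mVal s + ε := by
  simp [epsMinima, inf_eq F hs]

lemma epsMin_subset_Ioo {s : List Bool} (hsM : s.length = M) {ε : ℝ}
    (hε' : ε ≤ (2:ℝ)⁻¹ ^ (3 * M)) {x : ℝ}
    (hx : x ∈ epsMinima (Set.Icc (-1:ℝ) 1) (F.f s) ε) :
    x ∈ Set.Ioo (F.lo s) (F.hi s) := by
  have hs : s.length ≤ M := le_of_eq hsM
  rw [mem_epsMinima_iff F hs] at hx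
  have hlt : F.f s x < bSeq s.length := by
    have : mVal s + ε ≤ bSeq s.length := by
      simp only [mVal, hsM]; linarith
    linarith [hx.2]
  exact (F.level s s hs List.prefix_rfl x hx.1).mp hlt

end NemAux

open NemAux

/-- for a Nemirovski family of depth `M` and
`F_σ(x) = max_i f_{σ_i}(x_i)` on the cube `[-1,1]^n` (`σ` an `n`-tuple of
length-`M` strings), each `F_σ` is convex and `1`-Lipschitz for the sup-norm,
`S_ε(F_σ) = ∏_i S_ε(f_{σ_i})`, and distinct tuples have disjoint sets of
ε-minima (for `0 < ε ≤ 2^{-3M}`). -/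
theorem nemirovski_multidim (M n : ℕ) (hn : 1 ≤ n) (F : NemirovskiFamily M)
    (ε : ℝ) (hε : 0 < ε) (hε' : ε ≤ (2:ℝ)⁻¹ ^ (3 * M))
    (Fbig : (Fin n → List Bool) → (Fin n → ℝ) → ℝ)
    (hFbig : ∀ σ x, Fbig σ x = ⨆ i, F.f (σ i) (x i)) :
    (∀ σ : Fin n → List Bool, (∀ i, (σ i).length = M) →
      ConvexOn ℝ (Set.Icc (fun _ : Fin n => (-1:ℝ)) (fun _ : Fin n => (1:ℝ))) (Fbig σ) ∧
      LipschitzOnWith 1 (Fbig σ)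
        (Set.Icc (fun _ : Fin n => (-1:ℝ)) (fun _ : Fin n => (1:ℝ))) ∧
      epsMinima (Set.Icc (fun _ : Fin n => (-1:ℝ)) (fun _ : Fin n => (1:ℝ))) (Fbig σ) ε =
        Set.pi Set.univ (fun i => epsMinima (Set.Icc (-1:ℝ) 1) (F.f (σ i)) ε)) ∧
    (∀ σ τ : Fin n → List Bool, (∀ i, (σ i).length = M) → (∀ i, (τ i).length = M) →
      σ ≠ τ →
      epsMinima (Set.Icc (fun _ : Fin n => (-1:ℝ)) (fun _ : Fin n => (1:ℝ))) (Fbig σ) ε ∩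
        epsMinima (Set.Icc (fun _ : Fin n => (-1:ℝ)) (fun _ : Fin n => (1:ℝ))) (Fbig τ) ε
        = ∅) := by
  haveI : Nonempty (Fin n) := ⟨⟨0, hn⟩⟩
  set cube : Set (Fin n → ℝ) :=
    Set.Icc (fun _ : Fin n => (-1:ℝ)) (fun _ : Fin n => (1:ℝ)) with hcubedef
  have hcube : ∀ x : Fin n → ℝ, x ∈ cube ↔ ∀ i, x i ∈ Set.Icc (-1:ℝ) 1 := by
    intro x
    simp [hcubedef, Set.mem_Icc, Pi.le_def, forall_and]
  set m : ℝ := bSeq M - (2:ℝ)⁻¹ ^ (3 * M) with hm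
  have hmVal : ∀ s : List Bool, s.length = M → mVal s = m := by
    intro s hs; simp [mVal, hs, hm]
  -- sup over finite index < c iff all < c
  have hsup_lt : ∀ (g : Fin n → ℝ) (c : ℝ), (⨆ i, g i) < c ↔ ∀ i, g i < c := by
    intro g c
    constructor
    · intro h i
      exact lt_of_le_of_lt (le_ciSup (Set.finite_range g).bddAbove i) h
    · intro h
      obtain ⟨i0, hi0⟩ := Finite.exists_max g
      exact lt_of_le_of_lt (ciSup_le hi0) (h i0)
  -- lower bound for Fbig on cube
  have hFlow : ∀ (σ : Fin n → List Bool), (∀ i, (σ i).length = M) →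
      ∀ x ∈ cube, m ≤ Fbig σ x := by
    intro σ hσ x hx
    rw [hFbig]
    have i0 : Fin n := ⟨0, hn⟩
    calc m = mVal (σ i0) := (hmVal _ (hσ i0)).symm
      _ ≤ F.f (σ i0) (x i0) := lower_bound F (le_of_eq (hσ i0)) ((hcube x).mp hx i0)
      _ ≤ ⨆ i, F.f (σ i) (x i) :=
          le_ciSup (f := fun j => F.f (σ j) (x j)) (Set.finite_range _).bddAbove i0
  -- infimum of Fbig on cube
  have hFinf : ∀ (σ : Fin n → List Bool), (∀ i, (σ i).length = M) →
      sInf (Fbig σ '' cube) = m := by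
    intro σ hσ
    set c : Fin n → ℝ := fun i => (F.lo (σ i) + F.hi (σ i)) / 2 with hc
    have hcmem : c ∈ cube := by
      rw [hcube]
      intro i
      exact Icc_subset F (le_of_eq (hσ i)) (center_mem F (le_of_eq (hσ i)))
    have hcval : Fbig σ c = m := by
      rw [hFbig]
      have : ∀ i, F.f (σ i) (c i) = m := by
        intro i
        rw [hc]
        rw [f_center F (le_of_eq (hσ i))]
        exact hmVal _ (hσ i)
      simp only [this]
      exact ciSup_const
    apply le_antisymm
    · apply csInf_le
      · exact ⟨m, by rintro _ ⟨x, hx, rfl⟩; exact hFlow σ hσ x hx⟩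
      · exact ⟨c, hcmem, hcval⟩
    · refine le_csInf ⟨Fbig σ c, Set.mem_image_of_mem _ hcmem⟩ ?_
      rintro _ ⟨x, hx, rfl⟩; exact hFlow σ hσ x hx
  -- membership characterization
  have hmemF : ∀ (σ : Fin n → List Bool), (∀ i, (σ i).length = M) →
      ∀ x, x ∈ epsMinima cube (Fbig σ) ε ↔
        ∀ i, x i ∈ epsMinima (Set.Icc (-1:ℝ) 1) (F.f (σ i)) ε := by
    intro σ hσ x
    constructor
    · rintro ⟨hx, hlt⟩ i
      rw [hFinf σ hσ] at hlt
      rw [hFbig, hsup_lt] at hlt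
      rw [mem_epsMinima_iff F (le_of_eq (hσ i))]
      exact ⟨(hcube x).mp hx i, by rw [hmVal _ (hσ i)]; exact hlt i⟩
    · intro h
      have hx : x ∈ cube := (hcube x).mpr fun i =>
        ((mem_epsMinima_iff F (le_of_eq (hσ i)) ε (x i)).mp (h i)).1
      refine ⟨hx, ?_⟩
      rw [hFinf σ hσ, hFbig, hsup_lt]
      intro i
      have := ((mem_epsMinima_iff F (le_of_eq (hσ i)) ε (x i)).mp (h i)).2
      rwa [hmVal _ (hσ i)] at this
  constructor
  · intro σ hσ
    refine ⟨?_, ?_, ?_⟩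
    · -- convexity
      refine ⟨convex_Icc _ _, ?_⟩
      intro x hx y hy a b ha hb hab
      rw [hFbig, hFbig, hFbig]
      refine ciSup_le fun i => ?_
      have hxi := (hcube x).mp hx i
      have hyi := (hcube y).mp hy i
      have hconv := (F.convexOn (σ i) (le_of_eq (hσ i))).2 hxi hyi ha hb hab
      have heval : (a • x + b • y) i = a • x i + b • y i := by simp
      rw [heval]
      refine le_trans hconv ?_
      have h1 : F.f (σ i) (x i) ≤ ⨆ j, F.f (σ j) (x j) :=
        le_ciSup (f := fun j => F.f (σ j) (x j)) (Set.finite_range _).bddAbove i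
      have h2 : F.f (σ i) (y i) ≤ ⨆ j, F.f (σ j) (y j) :=
        le_ciSup (f := fun j => F.f (σ j) (y j)) (Set.finite_range _).bddAbove i
      simp only [smul_eq_mul]
      exact add_le_add (mul_le_mul_of_nonneg_left h1 ha) (mul_le_mul_of_nonneg_left h2 hb)
    · -- Lipschitz
      rw [lipschitzOnWith_iff_dist_le_mul]
      intro x hx y hy
      have key : ∀ u v : Fin n → ℝ, u ∈ cube → v ∈ cube →
          Fbig σ u ≤ Fbig σ v + dist u v := by
        intro u v hu hv
        rw [hFbig, hFbig]
        refine ciSup_le fun i => ?_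
        have hd : dist (F.f (σ i) (u i)) (F.f (σ i) (v i)) ≤ 1 * dist (u i) (v i) :=
          (lipschitzOnWith_iff_dist_le_mul.mp (F.lipschitz (σ i) (le_of_eq (hσ i))))
            (u i) ((hcube u).mp hu i) (v i) ((hcube v).mp hv i)
        have hdp : dist (u i) (v i) ≤ dist u v := dist_le_pi_dist u v i
        have h1 : F.f (σ i) (u i) ≤ F.f (σ i) (v i) + dist u v := by
          have := le_trans (le_abs_self _) (by rw [← Real.dist_eq]; linarith : |F.f (σ i) (u i) - F.f (σ i) (v i)| ≤ dist u v)
          linarith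
        refine le_trans h1 ?_
        have : F.f (σ i) (v i) ≤ ⨆ j, F.f (σ j) (v j) :=
          le_ciSup (f := fun j => F.f (σ j) (v j)) (Set.finite_range _).bddAbove i
        linarith
      have h1 := key x y hx hy
      have h2 := key y x hy hx
      rw [dist_comm y x] at h2
      rw [NNReal.coe_one, one_mul, Real.dist_eq, abs_sub_le_iff]
      constructor <;> linarith
    · -- product equality
      ext x
      rw [hmemF σ hσ x]
      simp [Set.mem_pi]
  · intro σ τ hσ hτ hne
    obtain ⟨i, hi⟩ : ∃ i, σ i ≠ τ i := by
      by_contra h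
      push_neg at h
      exact hne (funext h)
    ext x
    simp only [Set.mem_inter_iff, Set.mem_empty_iff_false, iff_false]
    rintro ⟨h1, h2⟩
    have hx1 := (hmemF σ hσ x).mp h1 i
    have hx2 := (hmemF τ hτ x).mp h2 i
    have hI1 := epsMin_subset_Ioo F (hσ i) hε' hx1
    have hI2 := epsMin_subset_Ioo F (hτ i) hε' hx2
    have hnp1 : ¬ σ i <+: τ i := fun hp =>
      hi (hp.eq_of_length ((hσ i).trans (hτ i).symm))
    have hnp2 : ¬ τ i <+: σ i := fun hp =>
      hi (hp.eq_of_length ((hτ i).trans (hσ i).symm)).symm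
    have := F.interior_disjoint (σ i) (τ i) (le_of_eq (hσ i)) (le_of_eq (hτ i)) hnp1 hnp2
    exact Set.eq_empty_iff_forall_notMem.mp this (x i) ⟨hI1, hI2⟩
end

section
/- Let (f_s, I_s, b_l) be a Nemirovski family of depth M ≥ 1. Then there exist a map q assigning to each point x ∈ [−1,1] a String Guessing query q(x) = (s, σ), and a map a assigning to each pair consisting of a point x ∈ [−1,1] and a possible String Guessing Oracle answer a pair of real numbers, such that for every hidden string S ∈ {0,1}^M and every x ∈ [−1,1], the pair (v, g) := a(x, O_S(q(x))) satisfies v = f_S(x) and f_S(y) ≥ v + g·(y − x) for all y ∈ [−1,1]. In other words, a single query to the String Guessing Oracle suffices to compute the value and a subgradient of the unknown instance f_S at any point. -/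
/-- The String Guessing Oracle for hidden string `S : Fin M → α`, queried with
a string `s` and an (intended-injective) embedding `σ`: answers
`some k` for the least (0-based) index `k` with `S (σ k) ≠ s k`, and `none`
(i.e. EQUAL) if the guessed part is entirely correct. -/
noncomputable def sgAnswer {α : Type*} {M : ℕ} (S : Fin M → α)
    (s : List α) (σ : Fin s.length → Fin M) : Option ℕ :=
  have : Decidable (∃ k : Fin s.length, S (σ k) ≠ s.get k) :=
    Classical.propDecidable _
  if ∃ k : Fin s.length, S (σ k) ≠ s.get k then
    some (sInf {k : ℕ | ∃ hk : k < s.length, S (σ ⟨k, hk⟩) ≠ s.get ⟨k, hk⟩})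
  else none

open Classical in
noncomputable def chainAux {M : ℕ} (F : NemirovskiFamily M) (x : ℝ) : ℕ → List Bool
  | 0 => []
  | n + 1 =>
    let t := chainAux F x n
    if x ∈ Set.Ioo (F.lo (t ++ [true])) (F.hi (t ++ [true])) then t ++ [true]
    else if x ∈ Set.Ioo (F.lo (t ++ [false])) (F.hi (t ++ [false])) then t ++ [false]
    else t

lemma chainAux_spec {M : ℕ} (F : NemirovskiFamily M) (x : ℝ) (n : ℕ) :
    (chainAux F x n).length ≤ n ∧
    (∀ l, 1 ≤ l → l ≤ (chainAux F x n).length →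
      x ∈ Set.Ioo (F.lo ((chainAux F x n).take l)) (F.hi ((chainAux F x n).take l))) ∧
    ((chainAux F x n).length < n →
      ∀ b, x ∉ Set.Ioo (F.lo (chainAux F x n ++ [b])) (F.hi (chainAux F x n ++ [b]))) := by
  classical
  induction n with
  | zero =>
      refine ⟨le_refl _, ?_, ?_⟩
      · intro l hl1 hl2; simp [chainAux] at hl2; omega
      · intro h; simp [chainAux] at h
  | succ n ih =>
      obtain ⟨h1, h2, h3⟩ := ih
      set t := chainAux F x n with ht
      have he : chainAux F x (n+1) =
          (if x ∈ Set.Ioo (F.lo (t ++ [true])) (F.hi (t ++ [true])) then t ++ [true]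
           else if x ∈ Set.Ioo (F.lo (t ++ [false])) (F.hi (t ++ [false])) then t ++ [false]
           else t) := rfl
      by_cases hT : x ∈ Set.Ioo (F.lo (t ++ [true])) (F.hi (t ++ [true]))
      · rw [he, if_pos hT]
        have hlen : t.length = n := by
          by_contra hne
          exact h3 (lt_of_le_of_ne h1 hne) true hT
        refine ⟨by simp [hlen], ?_, ?_⟩
        · intro l hl1 hl2
          simp only [List.length_append, List.length_singleton] at hl2
          rcases lt_or_eq_of_le hl2 with h | h
          · rw [List.take_append_of_le_length (by omega)]
            exact h2 l hl1 (by omega)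
          · rw [h, List.take_of_length_le (by simp)]
            exact hT
        · intro hlt; simp [hlen] at hlt
      · by_cases hF : x ∈ Set.Ioo (F.lo (t ++ [false])) (F.hi (t ++ [false]))
        · rw [he, if_neg hT, if_pos hF]
          have hlen : t.length = n := by
            by_contra hne
            exact h3 (lt_of_le_of_ne h1 hne) false hF
          refine ⟨by simp [hlen], ?_, ?_⟩
          · intro l hl1 hl2
            simp only [List.length_append, List.length_singleton] at hl2
            rcases lt_or_eq_of_le hl2 with h | h
            · rw [List.take_append_of_le_length (by omega)]
              exact h2 l hl1 (by omega)
            · rw [h, List.take_of_length_le (by simp)]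
              exact hF
          · intro hlt; simp [hlen] at hlt
        · rw [he, if_neg hT, if_neg hF]
          refine ⟨le_trans h1 (Nat.le_succ n), h2, ?_⟩
          intro _ b
          cases b
          · exact hF
          · exact hT

lemma exists_subgradient {f : ℝ → ℝ}
    (hc : ConvexOn ℝ (Set.Icc (-1:ℝ) 1) f)
    (hl : LipschitzOnWith 1 f (Set.Icc (-1:ℝ) 1))
    {x : ℝ} (hx : x ∈ Set.Icc (-1:ℝ) 1) :
    ∃ g : ℝ, ∀ y ∈ Set.Icc (-1:ℝ) 1, f x + g * (y - x) ≤ f y := by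
  have hsb : ∀ y ∈ Set.Icc (-1:ℝ) 1, |f x - f y| ≤ |x - y| := by
    intro y hy
    have := hl.dist_le_mul x hx y hy
    simpa [Real.dist_eq] using this
  by_cases hxl : -1 < x
  · set A : Set ℝ := (fun y => (f x - f y) / (x - y)) '' {y | y ∈ Set.Icc (-1:ℝ) 1 ∧ y < x}
      with hA
    have hAne : A.Nonempty := ⟨_, ⟨-1, ⟨⟨le_refl _, by linarith [hx.2]⟩, hxl⟩, rfl⟩⟩
    have hAbdd : BddAbove A := by
      refine ⟨1, ?_⟩
      rintro _ ⟨y, ⟨hy, hyx⟩, rfl⟩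
      have h1 := hsb y hy
      have h2 : f x - f y ≤ x - y := by
        have := (abs_le.mp h1).2
        have hxy : |x - y| = x - y := abs_of_pos (by linarith)
        linarith [hxy ▸ this]
      rw [div_le_one (by linarith)]
      exact h2
    refine ⟨sSup A, ?_⟩
    intro y hy
    rcases lt_trichotomy y x with h | h | h
    · have hmem : (f x - f y)/(x - y) ∈ A := ⟨y, ⟨hy, h⟩, rfl⟩
      have hle := le_csSup hAbdd hmem
      have hpos : 0 < x - y := by linarith
      rw [div_le_iff₀ hpos] at hle
      nlinarith
    · rw [h]; simp
    · have hle : sSup A ≤ (f y - f x)/(y - x) := by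
        apply csSup_le hAne
        rintro _ ⟨z, ⟨hz, hzx⟩, rfl⟩
        exact hc.slope_mono_adjacent hz hy hzx h
      have hpos : 0 < y - x := by linarith
      rw [le_div_iff₀ hpos] at hle
      nlinarith
  · have hx1 : x = -1 := le_antisymm (not_lt.mp hxl) hx.1
    set B : Set ℝ := (fun y => (f y - f x) / (y - x)) '' {y | y ∈ Set.Icc (-1:ℝ) 1 ∧ x < y}
      with hB
    have hBne : B.Nonempty := ⟨_, ⟨1, ⟨⟨by norm_num, le_refl _⟩, by rw [hx1]; norm_num⟩, rfl⟩⟩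
    have hBbdd : BddBelow B := by
      refine ⟨-1, ?_⟩
      rintro _ ⟨y, ⟨hy, hxy⟩, rfl⟩
      have h1 := hsb y hy
      have h2 : -(y - x) ≤ f y - f x := by
        have := (abs_le.mp h1).2
        have hxy' : |x - y| = y - x := by rw [abs_sub_comm]; exact abs_of_pos (by linarith)
        rw [hxy'] at this; linarith
      rw [le_div_iff₀ (by linarith)]
      linarith
    refine ⟨sInf B, ?_⟩
    intro y hy
    rcases eq_or_lt_of_le (show x ≤ y by rw [hx1]; exact hy.1) with h | h
    · rw [← h]; simp
    · have hmem : (f y - f x)/(y - x) ∈ B := ⟨y, ⟨hy, h⟩, rfl⟩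
      have hle := csInf_le hBbdd hmem
      have hpos : 0 < y - x := by linarith
      rw [le_div_iff₀ hpos] at hle
      nlinarith

noncomputable def wDef {M : ℕ} (F : NemirovskiFamily M) (x : ℝ) : Option ℕ → List Bool
  | none => chainAux F x M ++ List.replicate (M - (chainAux F x M).length) false
  | some m =>
    let t := chainAux F x M
    if h : m < t.length then t.take m ++ [! t[m]]
    else t ++ [decide (m = t.length)]

lemma key_lemma {M : ℕ} (F : NemirovskiFamily M) (S : Fin M → Bool) (x : ℝ)
    (hx : x ∈ Set.Icc (-1:ℝ) 1)
    (p : List Bool)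
    (hpdef : p = chainAux F x M ++ List.replicate (M - (chainAux F x M).length) false)
    (σ : Fin p.length → Fin M) (hσ : ∀ i, (σ i : ℕ) = (i : ℕ)) :
    wDef F x (sgAnswer S p σ) <+: List.ofFn S ∧
    (wDef F x (sgAnswer S p σ)).length ≤ M ∧
    F.f (List.ofFn S) x = F.f (wDef F x (sgAnswer S p σ)) x := by
  classical
  obtain ⟨hdM, hgood, hstop⟩ := chainAux_spec F x M
  revert σ
  subst hpdef
  set t := chainAux F x M with htdef
  set p := t ++ List.replicate (M - t.length) false with hpdef
  intro σ hσ
  have bool_ne : ∀ a b : Bool, a ≠ b → a = !b := by decide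
  have hplen : p.length = M := by rw [hpdef]; simp; omega
  have hpt : ∀ (i : ℕ) (hi : i < t.length) (hip : i < p.length), p.get ⟨i, hip⟩ = t[i] := by
    intro i hi hip
    rw [List.get_eq_getElem]
    exact List.getElem_append_left hi
  have hpf : ∀ (i : ℕ), t.length ≤ i → ∀ (hip : i < p.length), p.get ⟨i, hip⟩ = false := by
    intro i hi hip
    rw [List.get_eq_getElem]
    show (t ++ List.replicate (M - t.length) false)[i]'hip = false
    rw [List.getElem_append_right hi]
    simp
  have hσ' : ∀ (i : Fin p.length), σ i = ⟨i.1, by rw [← hplen]; exact i.2⟩ := by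
    intro i; apply Fin.ext; exact hσ i
  have hSlen : (List.ofFn S).length = M := by simp
  have hgetS : ∀ (i : ℕ) (hi : i < (List.ofFn S).length),
      (List.ofFn S)[i] = S ⟨i, by simpa using hi⟩ := fun i hi => List.getElem_ofFn ..
  by_cases h : ∃ k : Fin p.length, S (σ k) ≠ p.get k
  · -- answer is some m
    have hans : sgAnswer S p σ =
        some (sInf {k : ℕ | ∃ hk : k < p.length, S (σ ⟨k, hk⟩) ≠ p.get ⟨k, hk⟩}) := by
      simp only [sgAnswer]
      rw [if_pos h]
    set K := {k : ℕ | ∃ hk : k < p.length, S (σ ⟨k, hk⟩) ≠ p.get ⟨k, hk⟩} with hK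
    have hKne : K.Nonempty := by
      obtain ⟨k, hk⟩ := h
      exact ⟨k.1, k.2, hk⟩
    obtain ⟨hmp, hmne⟩ := Nat.sInf_mem hKne
    set m := sInf K with hm
    have hmin : ∀ j, j < m → ∀ (hj : j < p.length), S (σ ⟨j, hj⟩) = p.get ⟨j, hj⟩ := by
      intro j hj hjp
      by_contra hne
      have : m ≤ j := Nat.sInf_le ⟨hjp, hne⟩
      omega
    have hmM : m < M := hplen ▸ hmp
    rw [hans]
    by_cases hmd : m < t.length
    · -- sibling case
      have hweq : wDef F x (some m) = t.take m ++ [! t[m]] := by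
        simp only [wDef]
        rw [dif_pos hmd]
      have hwlen : (t.take m ++ [! t[m]'hmd]).length = m + 1 := by
        simp [List.length_take]; omega
      have hSm : S ⟨m, hmM⟩ = ! t[m]'hmd := by
        have h2 := hmne
        rw [hσ' ⟨m, hmp⟩] at h2
        rw [hpt m hmd hmp] at h2
        exact bool_ne _ _ h2
      have hpre : t.take m ++ [! t[m]'hmd] = (List.ofFn S).take (m+1) := by
        apply List.ext_getElem
        · rw [hwlen, List.length_take, hSlen]; omega
        · intro i h1 h2
          rw [hwlen] at h1
          have hiM : i < M := by omega
          have hrhs : ((List.ofFn S).take (m+1))[i] = S ⟨i, hiM⟩ := by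
            rw [List.getElem_take, hgetS]
          rw [hrhs]
          rcases Nat.lt_or_ge i m with him | him
          · rw [List.getElem_append_left (by rw [List.length_take]; omega)]
            rw [List.getElem_take]
            have := hmin i him (by omega)
            rw [hσ' ⟨i, by omega⟩] at this
            rw [hpt i (by omega) (by omega)] at this
            exact this.symm
          · have him' : i = m := by omega
            subst him'
            rw [List.getElem_append_right (by rw [List.length_take]; omega)]
            simp [List.length_take, Nat.min_eq_left (le_of_lt hmd), hSm]
      have hw1 : wDef F x (some m) <+: List.ofFn S := by
        rw [hweq, hpre]; exact List.take_prefix _ _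
      have hw2 : (wDef F x (some m)).length ≤ M := by
        rw [hweq, hwlen]; omega
      refine ⟨hw1, hw2, ?_⟩
      have hx2 : x ∈ Set.Ioo (F.lo (t.take (m+1))) (F.hi (t.take (m+1))) :=
        hgood (m+1) (by omega) (by omega)
      have htake_len : (t.take (m+1)).length = m + 1 := by
        rw [List.length_take]; omega
      have hne : t.take m ++ [! t[m]'hmd] ≠ t.take (m+1) := by
        intro heq
        have hl : (t.take m ++ [! t[m]'hmd])[m]'(by rw [hwlen]; omega) = ! t[m]'hmd := by
          rw [List.getElem_append_right (by rw [List.length_take]; omega)]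
          simp [List.length_take, Nat.min_eq_left (le_of_lt hmd)]
        have hr : (t.take (m+1))[m]'(by rw [htake_len]; omega) = t[m]'hmd := by
          rw [List.getElem_take]
        have := congrArg (fun l => l[m]?) heq
        rw [List.getElem?_eq_getElem (by rw [hwlen]; omega),
            List.getElem?_eq_getElem (by rw [htake_len]; omega), hl, hr] at this
        simp at this
      have hnp1 : ¬ (t.take m ++ [! t[m]'hmd]) <+: t.take (m+1) := by
        intro hp
        exact hne (hp.eq_of_length (by rw [hwlen, htake_len]))
      have hnp2 : ¬ t.take (m+1) <+: (t.take m ++ [! t[m]'hmd]) := by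
        intro hp
        exact hne (hp.eq_of_length (by rw [hwlen, htake_len])).symm
      have hdisj := F.interior_disjoint _ _ (by rw [hwlen]; omega) (by rw [htake_len]; omega)
        hnp1 hnp2
      have hxnot : x ∉ Set.Ioo (F.lo (t.take m ++ [! t[m]'hmd]))
          (F.hi (t.take m ++ [! t[m]'hmd])) := by
        intro hxw
        exact Set.eq_empty_iff_forall_notMem.mp hdisj x ⟨hxw, hx2⟩
      rw [hweq]
      exact F.eq_outside (List.ofFn S) _ (by simp) (hweq ▸ hw1) x hx hxnot
    · -- extension case
      have hdm : t.length ≤ m := not_lt.mp hmd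
      have hdM' : t.length < M := lt_of_le_of_lt hdm hmM
      have hweq : wDef F x (some m) = t ++ [decide (m = t.length)] := by
        simp only [wDef]
        rw [dif_neg hmd]
      have hwlen : (t ++ [decide (m = t.length)]).length = t.length + 1 := by simp
      have hSd : S ⟨t.length, hdM'⟩ = decide (m = t.length) := by
        by_cases hmd2 : m = t.length
        · have h2 := hmne
          rw [hσ' ⟨m, hmp⟩] at h2
          rw [hpf m hdm hmp] at h2
          have h3 : S ⟨m, hmM⟩ = true := bool_ne _ _ h2
          have h4 : decide (m = t.length) = true := by simp [hmd2]
          rw [h4, ← h3]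
          congr 1
          exact Fin.ext hmd2.symm
        · have hlt : t.length < m := by omega
          have h2 := hmin t.length hlt (by omega)
          rw [hσ' ⟨t.length, by omega⟩] at h2
          rw [hpf t.length (le_refl _) (by omega)] at h2
          rw [h2]
          simp [hmd2]
      have hpre : t ++ [decide (m = t.length)] = (List.ofFn S).take (t.length + 1) := by
        apply List.ext_getElem
        · rw [hwlen, List.length_take, hSlen]; omega
        · intro i h1 h2
          rw [hwlen] at h1
          have hiM : i < M := by omega
          have hrhs : ((List.ofFn S).take (t.length+1))[i] = S ⟨i, hiM⟩ := by
            rw [List.getElem_take, hgetS]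
          rw [hrhs]
          rcases Nat.lt_or_ge i t.length with him | him
          · rw [List.getElem_append_left him]
            have := hmin i (by omega) (by omega)
            rw [hσ' ⟨i, by omega⟩] at this
            rw [hpt i him (by omega)] at this
            exact this.symm
          · have him' : i = t.length := by omega
            subst him'
            rw [List.getElem_append_right (le_refl _)]
            simp [hSd]
      have hw1 : wDef F x (some m) <+: List.ofFn S := by
        rw [hweq, hpre]; exact List.take_prefix _ _
      have hw2 : (wDef F x (some m)).length ≤ M := by
        rw [hweq, hwlen]; omega
      refine ⟨hw1, hw2, ?_⟩
      have hxnot := hstop hdM' (decide (m = t.length))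
      rw [hweq]
      exact F.eq_outside (List.ofFn S) _ (by simp) (hweq ▸ hw1) x hx hxnot
  · -- answer is none : S agrees with p entirely
    have hans : sgAnswer S p σ = none := by
      simp only [sgAnswer]
      rw [if_neg h]
    push_neg at h
    have hSp : List.ofFn S = p := by
      apply List.ext_getElem (by rw [hSlen, hplen])
      intro i h1 h2
      have hi : i < p.length := h2
      have h3 := h ⟨i, hi⟩
      rw [hσ' ⟨i, hi⟩] at h3
      rw [hgetS i h1]
      rw [List.get_eq_getElem] at h3
      exact h3
    have hweq : wDef F x none = p := rfl
    rw [hans, hweq]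
    exact ⟨hSp ▸ List.prefix_refl p, hplen.le, by rw [hSp]⟩

/-- for a Nemirovski family of depth `M ≥ 1` there are a query
emulation `q` and an answer emulation `a` such that, for every hidden string
`S ∈ {0,1}^M` and every `x ∈ [-1,1]`, a single String Guessing Oracle call
yields `(v, g) = a x (O_S (q x))` with `v = f_S(x)` and `g` a subgradient of
`f_S` at `x` on `[-1,1]`. -/
theorem nemirovski_emulated_by_string_guessing (M : ℕ) (hM : 1 ≤ M)
    (F : NemirovskiFamily M) :
    ∃ (q : ℝ → (s : List Bool) × (Fin s.length → Fin M))
      (a : ℝ → Option ℕ → ℝ × ℝ),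
      (∀ x ∈ Set.Icc (-1:ℝ) 1,
        1 ≤ (q x).1.length ∧ (q x).1.length ≤ M ∧ Function.Injective (q x).2) ∧
      (∀ S : Fin M → Bool, ∀ x ∈ Set.Icc (-1:ℝ) 1,
        ∀ v g : ℝ, a x (sgAnswer S (q x).1 (q x).2) = (v, g) →
          v = F.f (List.ofFn S) x ∧
          ∀ y ∈ Set.Icc (-1:ℝ) 1, v + g * (y - x) ≤ F.f (List.ofFn S) y) := by
  classical
  have hplen : ∀ x : ℝ,
      (chainAux F x M ++ List.replicate (M - (chainAux F x M).length) false).length = M := by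
    intro x
    have := (chainAux_spec F x M).1
    simp
    omega
  refine ⟨fun x => ⟨chainAux F x M ++ List.replicate (M - (chainAux F x M).length) false,
            fun i => ⟨i.1, lt_of_lt_of_eq i.2 (hplen x)⟩⟩,
          fun x ans => (F.f (wDef F x ans) x,
            if h : ∃ g : ℝ, ∀ y ∈ Set.Icc (-1:ℝ) 1,
                F.f (wDef F x ans) x + g * (y - x) ≤ F.f (wDef F x ans) y
            then h.choose else 0), ?_, ?_⟩
  · intro x _
    refine ⟨?_, ?_, ?_⟩
    · rw [hplen x]; exact hM
    · exact (hplen x).le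
    · intro a b hab
      apply Fin.ext
      simpa using congrArg Fin.val hab
  · intro S x hx v g hvg
    obtain ⟨hw1, hw2, hw3⟩ := key_lemma F S x hx _ rfl (fun i => ⟨i.1, lt_of_lt_of_eq i.2 (hplen x)⟩) (fun i => rfl)
    set w := wDef F x (sgAnswer S
      (chainAux F x M ++ List.replicate (M - (chainAux F x M).length) false)
      (fun i => ⟨i.1, lt_of_lt_of_eq i.2 (hplen x)⟩)) with hwdef
    have hex : ∃ g : ℝ, ∀ y ∈ Set.Icc (-1:ℝ) 1,
        F.f w x + g * (y - x) ≤ F.f w y :=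
      exists_subgradient (F.convexOn w hw2) (F.lipschitz w hw2) hx
    simp only at hvg
    rw [Prod.ext_iff] at hvg
    obtain ⟨hv, hg⟩ := hvg
    simp only at hv hg
    rw [dif_pos hex] at hg
    constructor
    · rw [← hv, hw3]
    · intro y hy
      have h1 := hex.choose_spec y hy
      have h2 := F.mono (List.ofFn S) w (by simp) hw1 y hy
      rw [← hv, ← hg]
      linarith
end

section
/- Let n ≥ M ≥ 1, let 1 ≤ p < ∞, and for a sign vector S ∈ {−1,+1}^M define f_S on the closed unit ball B of (ℝ^n, ‖·‖_p) by f_S(x) = max_{1≤i≤M} S_i·x_i. Then there exist a map q assigning to each x ∈ B a String Guessing query, and a map a assigning to each pair consisting of a point x ∈ B and a possible String Guessing Oracle answer a pair (v, g) ∈ ℝ × ℝ^n, such that for every S ∈ {−1,+1}^M and every x ∈ B, the pair (v, g) := a(x, O_S(q(x))) satisfies: v = f_S(x), g = λ·e_j for some coordinate j ∈ {1,…,M} and some λ ∈ {−1,+1}, and f_S(y) ≥ v + ⟨g, y − x⟩ for all y ∈ B. In other words, a single query to the String Guessing Oracle suffices to compute the value and a subgradient supported on a single coordinate of the unknown instance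 f_S at any point. -/
/-- Permutation sorting the coordinates of `x` (restricted to the first `M`)
by decreasing absolute value. -/
noncomputable def myPerm {M n : ℕ} (hMn : M ≤ n) (x : Fin n → ℝ) :
    Equiv.Perm (Fin M) :=
  Tuple.sort (fun i => -|x (Fin.castLE hMn i)|)

/-- The guess at position `k`: the negation of the sign of the corresponding
coordinate of `x`. -/
noncomputable def myGuess {M n : ℕ} (hMn : M ≤ n) (x : Fin n → ℝ) (k : Fin M) : ℝ :=
  if 0 ≤ x (Fin.castLE hMn (myPerm hMn x k)) then -1 else 1

/-- Output of the answer emulation: value and subgradient. -/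
noncomputable def myOut {M n : ℕ} (hMn : M ≤ n) (x : Fin n → ℝ) (i : Fin M) (lam : ℝ) :
    ℝ × (Fin n → ℝ) :=
  (lam * x (Fin.castLE hMn (myPerm hMn x i)),
    fun k => if k = Fin.castLE hMn (myPerm hMn x i) then lam else 0)

private lemma key_lemma_s13 {M n : ℕ} (hM : 1 ≤ M) (hMn : M ≤ n)
    (f : (Fin M → ℝ) → (Fin n → ℝ) → ℝ)
    (hf : ∀ S x, f S x = ⨆ i : Fin M, S i * x (Fin.castLE hMn i))
    (S : Fin M → ℝ) (hS : ∀ i, S i = 1 ∨ S i = -1)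
    (x : Fin n → ℝ) (j : Fin M) (lam : ℝ) (hlam : lam = S j)
    (hmax : ∀ i : Fin M, S i * x (Fin.castLE hMn i) ≤ S j * x (Fin.castLE hMn j))
    (v : ℝ) (g : Fin n → ℝ)
    (hv : v = lam * x (Fin.castLE hMn j))
    (hg : g = fun k => if k = Fin.castLE hMn j then lam else 0) :
    v = f S x ∧
    (∃ (j' : Fin n) (lam' : ℝ), (j' : ℕ) < M ∧ (lam' = 1 ∨ lam' = -1) ∧
      g = fun k => if k = j' then lam' else 0) ∧
    ∀ y, v + ∑ k, g k * (y k - x k) ≤ f S y := by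
  haveI : Nonempty (Fin M) := ⟨⟨0, hM⟩⟩
  have hsum : ∀ y : Fin n → ℝ,
      ∑ k, g k * (y k - x k) = lam * (y (Fin.castLE hMn j) - x (Fin.castLE hMn j)) := by
    intro y
    subst hg
    have : ∀ k : Fin n,
        (if k = Fin.castLE hMn j then lam else 0) * (y k - x k)
        = if k = Fin.castLE hMn j then lam * (y k - x k) else 0 := by
      intro k; split <;> simp
    rw [Finset.sum_congr rfl (fun k _ => this k)]
    simp [Finset.sum_ite_eq']
  refine ⟨?_, ⟨Fin.castLE hMn j, lam, by simpa using j.2, hlam ▸ hS j, hg⟩, ?_⟩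
  · rw [hf, hv, hlam]
    exact le_antisymm
      (le_ciSup (f := fun i => S i * x (Fin.castLE hMn i)) (Set.finite_range _).bddAbove j)
      (ciSup_le hmax)
  · intro y
    rw [hf]
    have : v + ∑ k, g k * (y k - x k) = S j * y (Fin.castLE hMn j) := by
      rw [hsum y, hv, hlam]; ring
    rw [this]
    exact le_ciSup (f := fun i => S i * y (Fin.castLE hMn i)) (Set.finite_range _).bddAbove j

/-- for `n ≥ M ≥ 1`, `1 ≤ p < ∞` and
`f_S(x) = max_{i ≤ M} S_i x_i` on the unit `L^p`-ball `B`, there are a query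
emulation `q` (with valid `±1` queries) and an answer emulation `a` such that
for every hidden sign string `S` and every `x ∈ B`, a single String Guessing
Oracle call yields `(v, g) = a x (O_S (q x))` with `v = f_S(x)`, `g = λ e_j`
for some `j < M` and `λ ∈ {−1,+1}`, and `g` a subgradient of `f_S` at `x`. -/
theorem lp_single_coordinate_emulated_by_string_guessing (M n : ℕ)
    (hM : 1 ≤ M) (hMn : M ≤ n) (p : ℝ) (hp : 1 ≤ p)
    (f : (Fin M → ℝ) → (Fin n → ℝ) → ℝ)
    (hf : ∀ S x, f S x = ⨆ i : Fin M, S i * x (Fin.castLE hMn i)) :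
    ∃ (q : (Fin n → ℝ) → (s : List ℝ) × (Fin s.length → Fin M))
      (a : (Fin n → ℝ) → Option ℕ → ℝ × (Fin n → ℝ)),
      (∀ x ∈ pBall n p,
        1 ≤ (q x).1.length ∧ (q x).1.length ≤ M ∧ Function.Injective (q x).2 ∧
        ∀ k : Fin (q x).1.length, (q x).1.get k = 1 ∨ (q x).1.get k = -1) ∧
      (∀ S : Fin M → ℝ, (∀ i, S i = 1 ∨ S i = -1) → ∀ x ∈ pBall n p,
        ∀ (v : ℝ) (g : Fin n → ℝ), a x (sgAnswer S (q x).1 (q x).2) = (v, g) →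
          v = f S x ∧
          (∃ (j : Fin n) (lam : ℝ), (j : ℕ) < M ∧ (lam = 1 ∨ lam = -1) ∧
            g = fun k => if k = j then lam else 0) ∧
          ∀ y ∈ pBall n p, v + ∑ k, g k * (y k - x k) ≤ f S y) := by
  classical
  have hMlast : M - 1 < M := Nat.sub_lt hM one_pos
  refine ⟨fun x => ⟨List.ofFn (myGuess hMn x),
      fun k => myPerm hMn x (Fin.cast (List.length_ofFn) k)⟩,
    fun x ans =>
      match ans with
      | none => myOut hMn x ⟨M - 1, hMlast⟩ (myGuess hMn x ⟨M - 1, hMlast⟩)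
      | some k =>
        if h : k < M then myOut hMn x ⟨k, h⟩ (-(myGuess hMn x ⟨k, h⟩))
        else (0, fun _ => 0),
    ?_, ?_⟩
  · intro x _
    refine ⟨by simpa using hM, by simp, ?_, ?_⟩
    · intro a b hab
      have h2 := (myPerm hMn x).injective hab
      have h3 := congrArg Fin.val h2
      exact Fin.ext h3
    · intro k
      rw [List.get_ofFn]
      unfold myGuess
      split <;> simp
  · intro S hS x _ v g hvg
    set τ := myPerm hMn x with hτ
    have hlen : (List.ofFn (myGuess hMn x)).length = M := List.length_ofFn
    have hget : ∀ k : Fin (List.ofFn (myGuess hMn x)).length,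
        (List.ofFn (myGuess hMn x)).get k = myGuess hMn x (Fin.cast hlen k) :=
      fun k => List.get_ofFn _ k
    have hguess_pm : ∀ k : Fin M, myGuess hMn x k = 1 ∨ myGuess hMn x k = -1 := by
      intro k; unfold myGuess; split <;> simp
    have hgx : ∀ k : Fin M,
        myGuess hMn x k * x (Fin.castLE hMn (τ k)) = -|x (Fin.castLE hMn (τ k))| := by
      intro k
      unfold myGuess
      split
      · rw [abs_of_nonneg ‹_›]; ring
      · rw [abs_of_neg (lt_of_not_ge ‹_›)]; ring
    have hsort : ∀ k₁ k₂ : Fin M, k₁ ≤ k₂ →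
        -|x (Fin.castLE hMn (τ k₁))| ≤ -|x (Fin.castLE hMn (τ k₂))| := by
      intro k₁ k₂ h
      exact Tuple.monotone_sort (fun i => -|x (Fin.castLE hMn i)|) h
    have habs : ∀ i : Fin M, S i * x (Fin.castLE hMn i) ≤ |x (Fin.castLE hMn i)| := by
      intro i
      calc S i * x (Fin.castLE hMn i) ≤ |S i * x (Fin.castLE hMn i)| := le_abs_self _
        _ = |S i| * |x (Fin.castLE hMn i)| := abs_mul _ _
        _ = |x (Fin.castLE hMn i)| := by rcases hS i with h | h <;> simp [h]
    by_cases hP : ∃ k : Fin (List.ofFn (myGuess hMn x)).length,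
        S (τ (Fin.cast (List.length_ofFn) k)) ≠ (List.ofFn (myGuess hMn x)).get k
    · -- answer is some (sInf ...)
      have hans : sgAnswer S (List.ofFn (myGuess hMn x))
          (fun k => τ (Fin.cast (List.length_ofFn) k))
          = some (sInf {k : ℕ | ∃ hk : k < (List.ofFn (myGuess hMn x)).length,
              S (τ (Fin.cast (List.length_ofFn) ⟨k, hk⟩))
                ≠ (List.ofFn (myGuess hMn x)).get ⟨k, hk⟩}) := by
        rw [sgAnswer]; exact if_pos hP
      set T : Set ℕ := {k : ℕ | ∃ hk : k < (List.ofFn (myGuess hMn x)).length,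
          S (τ (Fin.cast (List.length_ofFn) ⟨k, hk⟩))
            ≠ (List.ofFn (myGuess hMn x)).get ⟨k, hk⟩} with hT
      have hne : T.Nonempty := by
        obtain ⟨k, hk⟩ := hP
        exact ⟨k.1, k.2, by simpa using hk⟩
      obtain ⟨hk0len, hk0ne⟩ := Nat.sInf_mem hne
      set k0 : ℕ := sInf T with hk0
      have hk0M : k0 < M := hlen ▸ hk0len
      have hcast : Fin.cast (List.length_ofFn (f := myGuess hMn x)) (⟨k0, hk0len⟩ :
          Fin (List.ofFn (myGuess hMn x)).length) = (⟨k0, hk0M⟩ : Fin M) := rfl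
      -- the hypothesis hvg reduces
      rw [hans] at hvg
      simp only [dif_pos hk0M] at hvg
      set j : Fin M := τ ⟨k0, hk0M⟩ with hj
      have hSj : S j = -(myGuess hMn x ⟨k0, hk0M⟩) := by
        have hne' : S j ≠ myGuess hMn x ⟨k0, hk0M⟩ := by
          rw [hget ⟨k0, hk0len⟩] at hk0ne
          simpa [hcast, hj] using hk0ne
        rcases hS j with h1 | h1 <;> rcases hguess_pm ⟨k0, hk0M⟩ with h2 | h2 <;>
          simp [h1, h2] at hne' ⊢
      have hSjx : S j * x (Fin.castLE hMn j) = |x (Fin.castLE hMn j)| := by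
        rw [hSj]
        have := hgx ⟨k0, hk0M⟩
        rw [← hj] at this
        nlinarith [this]
      have hmax : ∀ i : Fin M,
          S i * x (Fin.castLE hMn i) ≤ S j * x (Fin.castLE hMn j) := by
        intro i
        rw [hSjx]
        set k : Fin M := τ.symm i with hk
        have hik : i = τ k := (Equiv.apply_symm_apply τ i).symm
        rcases lt_trichotomy (k : ℕ) k0 with hlt | heq | hgt
        · -- before k0 the guess was right, so S i * x i = -|x i| ≤ 0
          have hmemT : (k : ℕ) ∉ T := Nat.notMem_of_lt_sInf (hk0 ▸ hlt)
          have hklen : (k : ℕ) < (List.ofFn (myGuess hMn x)).length := by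
            rw [hlen]; exact k.2
          have heqS : S (τ (Fin.cast (List.length_ofFn) ⟨(k : ℕ), hklen⟩))
              = (List.ofFn (myGuess hMn x)).get ⟨(k : ℕ), hklen⟩ := by
            by_contra hcon
            exact hmemT ⟨hklen, hcon⟩
          have hcast2 : Fin.cast (List.length_ofFn (f := myGuess hMn x))
              (⟨(k : ℕ), hklen⟩ : Fin (List.ofFn (myGuess hMn x)).length) = k := rfl
          rw [hget ⟨(k : ℕ), hklen⟩, hcast2] at heqS
          have : S i * x (Fin.castLE hMn i) = -|x (Fin.castLE hMn i)| := by
            rw [hik, heqS]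
            exact hgx k
          rw [this]
          have := abs_nonneg (x (Fin.castLE hMn j))
          have := abs_nonneg (x (Fin.castLE hMn i))
          linarith
        · have : k = (⟨k0, hk0M⟩ : Fin M) := Fin.ext heq
          rw [hik, this, ← hj, hSjx]
        · -- after k0, use sortedness
          have h1 : S i * x (Fin.castLE hMn i) ≤ |x (Fin.castLE hMn i)| := habs i
          have h2 : -|x (Fin.castLE hMn (τ ⟨k0, hk0M⟩))| ≤ -|x (Fin.castLE hMn (τ k))| :=
            hsort _ _ (Fin.le_def.mpr (le_of_lt hgt))
          rw [← hj] at h2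
          rw [hik] at h1 ⊢
          linarith
      have := key_lemma_s13 hM hMn f hf S hS x j (-(myGuess hMn x ⟨k0, hk0M⟩)) hSj.symm hmax
        v g (congrArg Prod.fst hvg).symm (congrArg Prod.snd hvg).symm
      exact ⟨this.1, this.2.1, fun y _ => this.2.2 y⟩
    · -- answer is none : all guesses right
      have hans : sgAnswer S (List.ofFn (myGuess hMn x))
          (fun k => τ (Fin.cast (List.length_ofFn) k)) = none := by
        rw [sgAnswer]; exact if_neg hP
      rw [hans] at hvg
      simp only at hvg
      push_neg at hP
      have hall : ∀ k : Fin M, S (τ k) = myGuess hMn x k := by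
        intro k
        have hklen : (k : ℕ) < (List.ofFn (myGuess hMn x)).length := by
          rw [hlen]; exact k.2
        have := hP ⟨(k : ℕ), hklen⟩
        have hcast2 : Fin.cast (List.length_ofFn (f := myGuess hMn x))
            (⟨(k : ℕ), hklen⟩ : Fin (List.ofFn (myGuess hMn x)).length) = k := rfl
        rw [hget ⟨(k : ℕ), hklen⟩, hcast2] at this
        exact this
      set last : Fin M := ⟨M - 1, hMlast⟩ with hlast
      set j : Fin M := τ last with hj
      have hFk : ∀ k : Fin M,
          S (τ k) * x (Fin.castLE hMn (τ k)) = -|x (Fin.castLE hMn (τ k))| := by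
        intro k; rw [hall k]; exact hgx k
      have hmax : ∀ i : Fin M,
          S i * x (Fin.castLE hMn i) ≤ S j * x (Fin.castLE hMn j) := by
        intro i
        set k : Fin M := τ.symm i with hk
        have hik : i = τ k := (Equiv.apply_symm_apply τ i).symm
        have hkle : k ≤ last := Fin.le_def.mpr (Nat.le_pred_of_lt k.2)
        rw [hik, hFk k, hj, hFk last]
        exact hsort _ _ hkle
      have := key_lemma_s13 hM hMn f hf S hS x j (myGuess hMn x last) (hall last).symm hmax
        v g (congrArg Prod.fst hvg).symm (congrArg Prod.snd hvg).symm
      exact ⟨this.1, this.2.1, fun y _ => this.2.2 y⟩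
end

section
/- Let l ∈ ℕ and β ∈ ℝ, let I = [a, b] ⊆ [−1,1] be a closed interval of length b − a = 2·4^{−l} with midpoint c, and for t ∈ [−1,1] write I(t) := a + (1 + t)(b − a)/2. Let f : [−1,1] → ℝ be convex and Lipschitz with constant 1, and suppose f(x) = β − 2^{−3l} + 2^{−l}·|x − c| for all x ∈ I. Set β' := β − 2·4^{−(l+1)}·2^{−l} and define g : [−1,1] → ℝ by g(x) = β' − 2^{−3(l+1)} + 2^{−(l+1)}·|x − I(−1/4)| for x ∈ [I(−1/2), b], and g(x) = f(x) otherwise. Then g is convex and Lipschitz with constant 1, g ≥ f pointwise on [−1,1], g(x) = f(x) for every x outside the open interval (a, b), and on the interval [I(−1/2), I(0)] — which has length 2·4^{−(l+1)} and midpoint I(−1/4) — g is given by g(x) = β' − 2^{−3(l+1)} + 2^{−(l+1)}·|x − I(−1/4)|, with g(I(−1/2)) = g(I(0)) = β'. -/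
/-- An affine function is convex on any convex set. -/
lemma affine_convexOn' (p q : ℝ) {S : Set ℝ} (hS : Convex ℝ S) :
    ConvexOn ℝ S (fun x => p * x + q) := by
  refine ⟨hS, fun x _ y _ u v hu hv huv => ?_⟩
  simp only [smul_eq_mul]
  have : u * (p * x + q) + v * (p * y + q) = p * (u * x + v * y) + q := by
    linear_combination q * huv
  linarith [this.ge]

/-- The small V-shape. -/
noncomputable def Vfun (β' s a : ℝ) : ℝ → ℝ :=
  fun x => β' - s ^ 3 / 8 + s / 2 * |x - (a + 3 * s ^ 2 / 4)|

lemma Vfun_eq_max (β' s a : ℝ) (hs : 0 ≤ s) (x : ℝ) :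
    Vfun β' s a x =
      max (β' - s ^ 3 / 8 + s / 2 * (x - (a + 3 * s ^ 2 / 4)))
        (β' - s ^ 3 / 8 + (-(s / 2)) * (x - (a + 3 * s ^ 2 / 4))) := by
  unfold Vfun
  rcases le_total 0 (x - (a + 3 * s ^ 2 / 4)) with h | h
  · rw [abs_of_nonneg h, max_eq_left (by nlinarith)]
  · rw [abs_of_nonpos h, max_eq_right (by nlinarith)]
    ring

lemma Vfun_convexOn (β' s a : ℝ) (hs : 0 ≤ s) {S : Set ℝ} (hS : Convex ℝ S) :
    ConvexOn ℝ S (Vfun β' s a) := by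
  have h1 : ConvexOn ℝ S (fun x => (s / 2) * x + (β' - s ^ 3 / 8 - s / 2 * (a + 3 * s ^ 2 / 4))) :=
    affine_convexOn' _ _ hS
  have h2 : ConvexOn ℝ S
      (fun x => (-(s / 2)) * x + (β' - s ^ 3 / 8 + s / 2 * (a + 3 * s ^ 2 / 4))) :=
    affine_convexOn' _ _ hS
  have hsup := h1.sup h2
  refine ⟨hS, fun x hx y hy u v hu hv huv => ?_⟩
  have key : ∀ z : ℝ, Vfun β' s a z =
      ((fun x => (s / 2) * x + (β' - s ^ 3 / 8 - s / 2 * (a + 3 * s ^ 2 / 4))) ⊔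
        (fun x => (-(s / 2)) * x + (β' - s ^ 3 / 8 + s / 2 * (a + 3 * s ^ 2 / 4)))) z := by
    intro z
    rw [Vfun_eq_max β' s a hs z]
    simp only [Pi.sup_apply]
    congr 1 <;> ring
  rw [key, key, key]
  exact hsup.2 hx hy hu hv huv

lemma Vfun_lipschitz (β' s a : ℝ) (hs0 : 0 ≤ s) (hs1 : s ≤ 1) :
    LipschitzWith 1 (Vfun β' s a) := by
  apply LipschitzWith.of_dist_le_mul
  intro x y
  simp only [Vfun, Real.dist_eq, NNReal.coe_one]
  set m := a + 3 * s ^ 2 / 4 with hm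
  have h1 : β' - s ^ 3 / 8 + s / 2 * |x - m| - (β' - s ^ 3 / 8 + s / 2 * |y - m|)
      = s / 2 * (|x - m| - |y - m|) := by ring
  rw [h1, abs_mul, abs_of_nonneg (by linarith : (0:ℝ) ≤ s / 2)]
  have h2 := abs_abs_sub_abs_le_abs_sub (x - m) (y - m)
  have h3 : x - m - (y - m) = x - y := by ring
  rw [h3] at h2
  nlinarith [h2, abs_nonneg (x - y), abs_nonneg (|x - m| - |y - m|),
    mul_le_mul_of_nonneg_right hs1 (abs_nonneg (x - y))]

set_option maxHeartbeats 4000000 in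
/-- the 'right modification' step.  If `f` is convex,
`1`-Lipschitz on `[-1,1]` and a V-shape `β - 2^{-3l} + 2^{-l}|x - c|` on the
interval `I = [a,b]` of length `2·4^{-l}` with midpoint `c`, and `g` replaces
`f` on `[I(-1/2), b]` by the smaller V-shape
`β' - 2^{-3(l+1)} + 2^{-(l+1)}|x - I(-1/4)|` (where
`β' = β - 2·4^{-(l+1)}·2^{-l}`), then `g` is convex, `1`-Lipschitz, `g ≥ f`,
`g = f` outside `(a,b)`, and on `[I(-1/2), I(0)]` — an interval of length
`2·4^{-(l+1)}` with midpoint `I(-1/4)` — `g` is that V-shape, taking the value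
`β'` at both its endpoints. -/
theorem right_modification (l : ℕ) (β a b : ℝ) (ha : -1 ≤ a) (hb : b ≤ 1)
    (hlen : b - a = 2 * (4:ℝ)⁻¹ ^ l)
    (c : ℝ) (hc : c = (a + b) / 2)
    (Ipt : ℝ → ℝ) (hIpt : ∀ t, Ipt t = a + (1 + t) * (b - a) / 2)
    (f : ℝ → ℝ)
    (hfconv : ConvexOn ℝ (Set.Icc (-1:ℝ) 1) f)
    (hflip : LipschitzOnWith 1 f (Set.Icc (-1:ℝ) 1))
    (hfI : ∀ x ∈ Set.Icc a b,
      f x = β - (2:ℝ)⁻¹ ^ (3 * l) + (2:ℝ)⁻¹ ^ l * |x - c|)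
    (β' : ℝ) (hβ' : β' = β - 2 * (4:ℝ)⁻¹ ^ (l + 1) * (2:ℝ)⁻¹ ^ l)
    (g : ℝ → ℝ)
    (hg : ∀ x, g x =
      if x ∈ Set.Icc (Ipt (-(1/2))) b then
        β' - (2:ℝ)⁻¹ ^ (3 * (l + 1)) + (2:ℝ)⁻¹ ^ (l + 1) * |x - Ipt (-(1/4))|
      else f x) :
    ConvexOn ℝ (Set.Icc (-1:ℝ) 1) g ∧
    LipschitzOnWith 1 g (Set.Icc (-1:ℝ) 1) ∧
    (∀ x ∈ Set.Icc (-1:ℝ) 1, f x ≤ g x) ∧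
    (∀ x ∈ Set.Icc (-1:ℝ) 1, x ∉ Set.Ioo a b → g x = f x) ∧
    Ipt 0 - Ipt (-(1/2)) = 2 * (4:ℝ)⁻¹ ^ (l + 1) ∧
    (Ipt (-(1/2)) + Ipt 0) / 2 = Ipt (-(1/4)) ∧
    (∀ x ∈ Set.Icc (Ipt (-(1/2))) (Ipt 0),
      g x = β' - (2:ℝ)⁻¹ ^ (3 * (l + 1)) + (2:ℝ)⁻¹ ^ (l + 1) * |x - Ipt (-(1/4))|) ∧
    g (Ipt (-(1/2))) = β' ∧ g (Ipt 0) = β' := by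
  obtain ⟨s, hs_def⟩ : ∃ s : ℝ, s = (2:ℝ)⁻¹ ^ l := ⟨_, rfl⟩
  rw [← hs_def] at hfI hβ'
  rw [show (2:ℝ)⁻¹ ^ (3 * l) = s ^ 3 by rw [hs_def, mul_comm, pow_mul]] at hfI
  have hs : 0 < s := by rw [hs_def]; positivity
  have hs1 : s ≤ 1 := by rw [hs_def]; exact pow_le_one₀ (by norm_num) (by norm_num)
  have h4 : (4:ℝ)⁻¹ ^ l = s ^ 2 := by
    rw [show (4:ℝ)⁻¹ = (2:ℝ)⁻¹ ^ 2 by norm_num, ← pow_mul, mul_comm, pow_mul, hs_def]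
  have h3l1 : (2:ℝ)⁻¹ ^ (3 * (l + 1)) = s ^ 3 / 8 := by
    rw [mul_comm, pow_mul, pow_succ, hs_def]; ring
  have h2l1 : (2:ℝ)⁻¹ ^ (l + 1) = s / 2 := by
    rw [pow_succ, hs_def]; ring
  have hb2 : b = a + 2 * s ^ 2 := by rw [h4] at hlen; linarith
  have hc2 : c = a + s ^ 2 := by rw [hc, hb2]; ring
  have hI2 : Ipt (-(1/2)) = a + s ^ 2 / 2 := by rw [hIpt, hb2]; ring
  have hI4 : Ipt (-(1/4)) = a + 3 * s ^ 2 / 4 := by rw [hIpt, hb2]; ring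
  have hI0 : Ipt 0 = a + s ^ 2 := by rw [hIpt, hb2]; ring
  have hβ2 : β' = β - s ^ 3 / 2 := by rw [hβ', pow_succ, h4, hs_def]; ring
  have hgV : ∀ x, g x = if x ∈ Set.Icc (a + s ^ 2 / 2) b then Vfun β' s a x else f x := by
    intro x
    rw [hg, hI2, hI4, h3l1, h2l1]
    rfl
  -- values of f at key points
  have hamem : a ∈ Set.Icc a b := ⟨le_refl a, by nlinarith⟩
  have hcmem : c ∈ Set.Icc a b := ⟨by nlinarith [hc2], by nlinarith [hc2]⟩
  have hbmem : b ∈ Set.Icc a b := ⟨by nlinarith, le_refl b⟩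
  have hfa : f a = β := by
    have h := hfI a hamem
    rw [abs_of_nonpos (by nlinarith [hc2]), hc2] at h
    linear_combination h
  have hfc : f c = β - s ^ 3 := by
    have h := hfI c hcmem
    simpa using h
  have hfb : f b = β := by
    have h := hfI b hbmem
    rw [abs_of_nonneg (by nlinarith [hc2])] at h
    linear_combination h + s * hb2 - s * hc2
  -- slope estimates outside [a,b]
  have hleft : ∀ x, -1 ≤ x → x < a → β + s * (a - x) ≤ f x := by
    intro x hx1 hxa
    have hca : x < a := hxa
    have hac : a < c := by nlinarith [hc2]
    have hm := hfconv.slope_mono_adjacent (x := x) (y := a) (z := c)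
      ⟨hx1, by linarith [hbmem.1, hb]⟩ ⟨by linarith, by linarith [hcmem.2, hb]⟩ hca hac
    rw [hfa, hfc] at hm
    have hrhs : (β - s ^ 3 - β) / (c - a) = -s := by
      rw [hc2, div_eq_iff (by nlinarith : a + s ^ 2 - a ≠ 0)]; ring
    rw [hrhs, div_le_iff₀ (by linarith : (0:ℝ) < a - x)] at hm
    nlinarith [hm]
  have hright : ∀ x, b < x → x ≤ 1 → β + s * (x - b) ≤ f x := by
    intro x hbx hx1
    have hcb : c < b := by nlinarith [hc2]
    have hm := hfconv.slope_mono_adjacent (x := c) (y := b) (z := x)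
      ⟨by linarith [hcmem.1, ha], by linarith [hcmem.2]⟩ ⟨by linarith [hbmem.1, ha], hx1⟩ hcb hbx
    rw [hfb, hfc] at hm
    have hlhs : (β - (β - s ^ 3)) / (b - c) = s := by
      rw [hc2, hb2, div_eq_iff (by nlinarith : a + 2 * s ^ 2 - (a + s ^ 2) ≠ 0)]; ring
    rw [hlhs, le_div_iff₀ (by linarith : (0:ℝ) < x - b)] at hm
    nlinarith [hm]
  -- f ≤ V on the replaced interval
  have hfleV : ∀ x ∈ Set.Icc (a + s ^ 2 / 2) b, f x ≤ Vfun β' s a x := by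
    intro x hx
    obtain ⟨hx1, hx2⟩ := hx
    have hfx := hfI x ⟨by nlinarith, hx2⟩
    rw [hfx, hc2, hβ2]
    unfold Vfun
    rw [hb2] at hx2
    rcases le_total x (a + s ^ 2) with hxc | hxc
    · rw [abs_of_nonpos (by linarith)]
      rcases le_total x (a + 3 * s ^ 2 / 4) with hxm | hxm
      · rw [abs_of_nonpos (by linarith)]
        nlinarith [mul_nonneg hs.le (by linarith : (0:ℝ) ≤ x - (a + s ^ 2 / 2))]
      · rw [abs_of_nonneg (by linarith)]
        nlinarith [mul_nonneg hs.le (by linarith : (0:ℝ) ≤ x - (a + 3 * s ^ 2 / 4)),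
          mul_nonneg hs.le (by linarith : (0:ℝ) ≤ a + s ^ 2 - x)]
    · rw [abs_of_nonneg (by linarith), abs_of_nonneg (by linarith)]
      nlinarith [mul_nonneg hs.le (by linarith : (0:ℝ) ≤ a + 2 * s ^ 2 - x)]
  -- V ≤ f off the replaced interval
  have hVlef : ∀ x ∈ Set.Icc (-1:ℝ) 1, x ∉ Set.Icc (a + s ^ 2 / 2) b →
      Vfun β' s a x ≤ f x := by
    intro x hx hn
    rw [Set.mem_Icc] at hn
    push_neg at hn
    unfold Vfun
    rw [hβ2]
    rcases lt_or_ge x (a + s ^ 2 / 2) with hxs | hxs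
    · rw [abs_of_nonpos (by nlinarith)]
      rcases lt_or_ge x a with hxa | hxa
      · have hf := hleft x hx.1 hxa
        nlinarith [mul_nonneg hs.le (by linarith : (0:ℝ) ≤ a - x)]
      · have hfx := hfI x ⟨hxa, by nlinarith⟩
        rw [hfx, hc2, abs_of_nonpos (by nlinarith)]
        nlinarith [mul_nonneg hs.le (by linarith : (0:ℝ) ≤ a + s ^ 2 / 2 - x)]
    · have hbx : b < x := hn hxs
      have hf := hright x hbx hx.2
      rw [abs_of_nonneg (by nlinarith [hb2])]
      nlinarith [mul_nonneg hs.le (by nlinarith [hb2] : (0:ℝ) ≤ x - b), hb2]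
  -- g is pointwise max of f and V on [-1,1]
  have key : ∀ x ∈ Set.Icc (-1:ℝ) 1, g x = max (f x) (Vfun β' s a x) := by
    intro x hx
    rw [hgV]
    split_ifs with h
    · exact (max_eq_right (hfleV x h)).symm
    · exact (max_eq_left (hVlef x hx h)).symm
  have hVconv := Vfun_convexOn β' s a hs.le (convex_Icc (-1:ℝ) 1)
  have hVlip : LipschitzOnWith 1 (Vfun β' s a) (Set.Icc (-1:ℝ) 1) :=
    (Vfun_lipschitz β' s a hs.le hs1).lipschitzOnWith
  refine ⟨?_, ?_, ?_, ?_, ?_, ?_, ?_, ?_, ?_⟩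
  · -- convexity
    have hsup := hfconv.sup hVconv
    refine ⟨convex_Icc _ _, fun x hx y hy u v hu hv huv => ?_⟩
    have hxy : u • x + v • y ∈ Set.Icc (-1:ℝ) 1 := (convex_Icc _ _) hx hy hu hv huv
    rw [key _ hxy, key _ hx, key _ hy]
    have h := hsup.2 hx hy hu hv huv
    simpa [Pi.sup_apply] using h
  · -- Lipschitz
    rw [lipschitzOnWith_iff_dist_le_mul] at hflip hVlip ⊢
    intro x hx y hy
    rw [key x hx, key y hy, Real.dist_eq]
    calc |max (f x) (Vfun β' s a x) - max (f y) (Vfun β' s a y)|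
        ≤ max |f x - f y| |Vfun β' s a x - Vfun β' s a y| :=
          abs_max_sub_max_le_max _ _ _ _
      _ ≤ (1:NNReal) * dist x y := by
          apply max_le
          · rw [← Real.dist_eq]; exact hflip x hx y hy
          · rw [← Real.dist_eq]; exact hVlip x hx y hy
  · -- f ≤ g
    intro x hx
    rw [key x hx]
    exact le_max_left _ _
  · -- g = f outside (a,b)
    intro x hx hn
    rw [hgV]
    split_ifs with h
    · have hxb : x = b := by
        by_contra hne
        exact hn ⟨by nlinarith [h.1], lt_of_le_of_ne h.2 hne⟩
      subst hxb
      unfold Vfun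
      rw [hfb, hb2, abs_of_nonneg (by nlinarith), hβ2]
      ring
    · rfl
  · have h4l1 : (4:ℝ)⁻¹ ^ (l + 1) = s ^ 2 / 4 := by rw [pow_succ, h4]; ring
    rw [hI0, hI2, h4l1]; ring
  · rw [hI2, hI0, hI4]; ring
  · intro x hx
    rw [hI2, hI0] at hx
    have hmem : x ∈ Set.Icc (a + s ^ 2 / 2) b := by
      rw [Set.mem_Icc]; constructor <;> nlinarith [hx.1, hx.2, hb2]
    rw [hgV, if_pos hmem, hI4, h3l1, h2l1]
    rfl
  · have hmem : a + s ^ 2 / 2 ∈ Set.Icc (a + s ^ 2 / 2) b := by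
      rw [Set.mem_Icc]; constructor <;> nlinarith [hb2]
    rw [hI2, hgV, if_pos hmem]
    unfold Vfun
    rw [abs_of_nonpos (by nlinarith)]
    ring
  · have hmem : a + s ^ 2 ∈ Set.Icc (a + s ^ 2 / 2) b := by
      rw [Set.mem_Icc]; constructor <;> nlinarith [hb2]
    rw [hI0, hgV, if_pos hmem]
    unfold Vfun
    rw [abs_of_nonneg (by nlinarith)]
    ring
end
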